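/- arXiv:1901.01117 — 12 statements merged into one kernel-verified Lean document; each statement's English description precedes it below -/
import Mathlib

section
/- Let F be a coherent (κ⁺,X,μ)-forest that is closed under modifications at fewer than κ points. Then two functions f, g ∈ F have a common extension in F if and only if f and g agree on dom(f) ∩ dom(g). -/
open Cardinal Set
open scoped Classical

universe u v

namespace ForestPaper

variable {X : Type u} {μ : Type v}

/-- The domain of a partial function represented as an `Option`-valued function. -/
def pdom (f : X → Option μ) : Set X := {x | f x ≠ none}

/-- The range of a partial function. -/
def pran (f : X → Option μ) : Set μ := {y | ∃ x, f x = some y}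

/-- `Ext g f` means the partial function `g` extends `f`. -/
def Ext (g f : X → Option μ) : Prop := ∀ x, f x ≠ none → g x = f x

/-- Restriction of a partial function to a set. -/
noncomputable def pres (f : X → Option μ) (z : Set X) : X → Option μ :=
  fun x => if x ∈ z then f x else none

/-- The set of points of the common domain where `f` and `g` disagree. -/
def pdiff (f g : X → Option μ) : Set X :=
  {x | f x ≠ none ∧ g x ≠ none ∧ f x ≠ g x}

/-- `f` and `g` agree on their common domain. -/
def Agree (f g : X → Option μ) : Prop :=
  ∀ x, f x ≠ none → g x ≠ none → f x = g x

/-- Two members of `F` are compatible if they have a common extension in `F`. -/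
def Compat (F : Set (X → Option μ)) (f g : X → Option μ) : Prop :=
  ∃ h ∈ F, Ext h f ∧ Ext h g

/-- `A` is an antichain in `F`: a pairwise incompatible subset of `F`. -/
def IsAntichainIn (F A : Set (X → Option μ)) : Prop :=
  A ⊆ F ∧ ∀ f ∈ A, ∀ g ∈ A, f ≠ g → ¬ Compat F f g

/-- `A` is a maximal antichain in `F`. -/
def IsMaxAntichainIn (F A : Set (X → Option μ)) : Prop :=
  IsAntichainIn F A ∧ ∀ f ∈ F, ∃ g ∈ A, Compat F f g

/-- A `(c, X, μ)`-forest: a collection of partial functions from `X` to `μ` whose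
domains are exactly the subsets of `X` of size `< c`, with coherent restrictions
between levels (every restriction of a member is a member, and every member
extends to any larger admissible domain). -/
structure IsForest (c : Cardinal.{u}) (F : Set (X → Option μ)) : Prop where
  dom_small : ∀ f ∈ F, #(pdom f) < c
  exists_dom : ∀ z : Set X, #z < c → ∃ f ∈ F, pdom f = z
  restrict_mem : ∀ f ∈ F, ∀ z : Set X, z ⊆ pdom f → pres f z ∈ F
  extend_mem : ∀ f ∈ F, ∀ z : Set X, #z < c → pdom f ⊆ z →
    ∃ g ∈ F, pdom g = z ∧ Ext g f

/-- A family is `κ`-coherent when any two members disagree at `< κ` many points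
of their common domain. -/
def Coherent (κ : Cardinal.{u}) (F : Set (X → Option μ)) : Prop :=
  ∀ f ∈ F, ∀ g ∈ F, #(pdiff f g) < κ

/-- `F` is closed under modifications at `< κ` many points. -/
def ClosedMod (κ : Cardinal.{u}) (F : Set (X → Option μ)) : Prop :=
  ∀ f ∈ F, ∀ f' : X → Option μ, pdom f' = pdom f →
    #{x | f x ≠ f' x} < κ → f' ∈ F

/-- A partial function is injective (on its domain). -/
def PInj (f : X → Option μ) : Prop :=
  ∀ x y, f x ≠ none → f x = f y → x = y

/-- A partial function is `< κ`-to-1: every fiber has size `< κ`. -/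
def SmallTo1 (κ : Cardinal.{u}) (f : X → Option μ) : Prop :=
  ∀ y : μ, #{x | f x = some y} < κ

/-- `F` contains a `⊆`-well-ordered chain of order type `o`. -/
def HasChain (o : Ordinal.{u}) (F : Set (X → Option μ)) : Prop :=
  ∃ c : o.ToType → (X → Option μ), (∀ i, c i ∈ F) ∧
    ∀ i j, i < j → Ext (c j) (c i) ∧ c i ≠ c j

/-! A common extension `h` of `f` on `dom f ∪ dom g` exists in any forest, but it may
disagree with `g`. Overwriting `h` by `g` on `dom g` changes it only on `pdiff h g`,
which has size `< κ` by coherence, so the result stays in the forest; if `f` and `g`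
agree, it still extends `f`. -/

theorem agree_of_ext {f g h : X → Option μ} (hf : Ext h f) (hg : Ext h g) : Agree f g :=
  fun x hfx hgx => (hf x hfx).symm.trans (hg x hgx)

def override (g h : X → Option μ) : X → Option μ := fun x => (g x).or (h x)

theorem ext_override_left (g h : X → Option μ) : Ext (override g h) g := by
  intro x hgx
  obtain ⟨y, hy⟩ := Option.ne_none_iff_exists'.mp hgx
  simp [override, hy]

theorem ext_override_of_agree {f g h : X → Option μ} (hag : Agree f g) (hh : Ext h f) :
    Ext (override g h) f := by
  intro x hfx
  by_cases hgx : g x = none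
  · simp [override, hgx, hh x hfx]
  · rw [hag x hfx hgx]
    exact ext_override_left g h x hgx

theorem pdom_override_of_subset {g h : X → Option μ} (hgh : pdom g ⊆ pdom h) :
    pdom (override g h) = pdom h := by
  ext x
  by_cases hgx : g x = none
  · simp [pdom, override, hgx]
  · have hhx : h x ≠ none := hgh hgx
    obtain ⟨y, hy⟩ := Option.ne_none_iff_exists'.mp hgx
    simp_all [pdom, override]

theorem setOf_ne_override_subset_pdiff {g h : X → Option μ} (hgh : pdom g ⊆ pdom h) :
    {x | h x ≠ override g h x} ⊆ pdiff h g := by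
  intro x hx
  by_cases hgx : g x = none
  · simp [override, hgx] at hx
  · obtain ⟨y, hy⟩ := Option.ne_none_iff_exists'.mp hgx
    refine ⟨hgh hgx, hgx, ?_⟩
    simpa [override, hy] using hx

theorem override_mem {κ : Cardinal.{u}} {F : Set (X → Option μ)}
    (hcoh : Coherent κ F) (hmod : ClosedMod κ F) {g h : X → Option μ} (hg : g ∈ F)
    (hh : h ∈ F) (hgh : pdom g ⊆ pdom h) : override g h ∈ F :=
  hmod h hh _ (pdom_override_of_subset hgh)
    ((mk_le_mk_of_subset (setOf_ne_override_subset_pdiff hgh)).trans_lt (hcoh h hh g hg))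

theorem mk_union_lt_succ {κ : Cardinal.{u}} (hκ : ℵ₀ ≤ κ) {s t : Set X}
    (hs : #s < Order.succ κ) (ht : #t < Order.succ κ) : #(s ∪ t : Set X) < Order.succ κ := by
  rw [Order.lt_succ_iff] at *
  calc #(s ∪ t : Set X) ≤ #s + #t := mk_union_le s t
    _ ≤ κ + κ := add_le_add hs ht
    _ = κ := add_eq_self hκ

/-- In a coherent `(κ⁺,X,μ)`-forest closed under `< κ` modifications, two members
have a common extension in the forest iff they agree on their common domain. -/
theorem stmt1 {X μ : Type u} (κ : Cardinal.{u}) (hκ : ℵ₀ ≤ κ)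
    (F : Set (X → Option μ)) (hF : IsForest (Order.succ κ) F)
    (hcoh : Coherent κ F) (hmod : ClosedMod κ F)
    (f : X → Option μ) (hf : f ∈ F) (g : X → Option μ) (hg : g ∈ F) :
    (∃ h ∈ F, Ext h f ∧ Ext h g) ↔ Agree f g := by
  refine ⟨fun ⟨h, _, hhf, hhg⟩ => agree_of_ext hhf hhg, fun hag => ?_⟩
  obtain ⟨h, hh, hdom, hhf⟩ := hF.extend_mem f hf (pdom f ∪ pdom g)
    (mk_union_lt_succ hκ (hF.dom_small f hf) (hF.dom_small g hg)) subset_union_left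
  have hgh : pdom g ⊆ pdom h := hdom ▸ subset_union_right
  exact ⟨override g h, override_mem hcoh hmod hg hh hgh,
    ext_override_of_agree hag hhf, ext_override_left g h⟩

end ForestPaper
end

section
/- Let κ be a regular cardinal and let F = {f_α : α < κ} be a κ-coherent family of partial functions from κ to μ. Then there exists a total function f : κ → μ such that {f} ∪ F is κ-coherent, i.e., f disagrees with each f_α at fewer than κ points of dom(f_α). -/
open Cardinal Set
open scoped Classical

universe u v

namespace ForestPaper

variable {X : Type u} {μ : Type v}

/-!
Take `f x` to be the value at `x` of the first `f_β` defined at `x`. Where `f_α` is defined and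
differs from `f`, it disagrees with that `f_β`, `β ≤ α`; so the disagreement set of `f` and
`f_α` lies in `⋃ β ≤ α, pdiff f_β f_α`, a union of `< κ` sets of size `< κ`, which is small
since `κ` is regular.
-/

section FirstValue

variable {ι : Type*} [LinearOrder ι] [WellFoundedLT ι] [Nonempty μ]

noncomputable def firstValue (F : ι → X → Option μ) (x : X) : μ :=
  if h : {β | F β x ≠ none}.Nonempty then
    (F (wellFounded_lt.min _ h) x).getD (Classical.arbitrary μ)
  else Classical.arbitrary μ

theorem exists_le_apply_eq_some_firstValue (F : ι → X → Option μ) {α : ι} {x : X}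
    (hx : F α x ≠ none) : ∃ β ≤ α, F β x = some (firstValue F x) := by
  have h : {β | F β x ≠ none}.Nonempty := ⟨α, hx⟩
  obtain ⟨y, hy⟩ := Option.ne_none_iff_exists'.1 (wellFounded_lt.min_mem _ h)
  refine ⟨wellFounded_lt.min _ h, wellFounded_lt.min_le (s := {β | F β x ≠ none}) hx, ?_⟩
  rw [firstValue, dif_pos h, hy, Option.getD_some]

theorem setOf_ne_firstValue_subset (F : ι → X → Option μ) (α : ι) :
    {x | F α x ≠ none ∧ F α x ≠ some (firstValue F x)} ⊆ ⋃ β ∈ Iic α, pdiff (F β) (F α) := by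
  rintro x ⟨hdom, hne⟩
  obtain ⟨β, hβα, hβ⟩ := exists_le_apply_eq_some_firstValue F hdom
  exact mem_biUnion hβα ⟨by simp [hβ], hdom, fun h => hne (h ▸ hβ)⟩

end FirstValue

theorem mk_setOf_ne_firstValue_lt {κ : Cardinal.{u}} (hκ : κ.IsRegular) {ι : Type u}
    [LinearOrder ι] [WellFoundedLT ι] [Nonempty μ] (F : ι → X → Option μ)
    (hι : ∀ α : ι, #(Iic α) < κ) (hcoh : ∀ α β, #(pdiff (F α) (F β)) < κ) (α : ι) :
    #{x | F α x ≠ none ∧ F α x ≠ some (firstValue F x)} < κ :=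
  (mk_le_mk_of_subset (setOf_ne_firstValue_subset F α)).trans_lt <|
    (card_biUnion_lt_iff_forall_of_isRegular hκ (hι α)).2 fun β _ => hcoh β α

/-- For `κ` regular and a `κ`-coherent family `⟨f_α : α < κ⟩` of partial functions
from `κ` to `μ`, there is a total function `f : κ → μ` cohering with every `f_α`. -/
theorem stmt2 (κ : Cardinal.{u}) (hκ : κ.IsRegular) {μ : Type u} [Nonempty μ]
    (F : κ.ord.ToType → (κ.ord.ToType → Option μ))
    (hcoh : ∀ α β, #(pdiff (F α) (F β)) < κ) :
    ∃ f : κ.ord.ToType → μ, ∀ α,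
      #{x | F α x ≠ none ∧ F α x ≠ some (f x)} < κ := by
  have hIic : ∀ α : κ.ord.ToType, #(Iic α) < κ := fun α => by
    simpa using mk_Iic_lt α (by simp) (by simpa using hκ.aleph0_le)
  exact ⟨firstValue F, mk_setOf_ne_firstValue_lt hκ F hIic hcoh⟩
end ForestPaper
end

section
/- Let κ be a regular cardinal and let F = {f_α : α < κ} be a κ-coherent family of partial functions from κ to κ, each of which is < κ-to-1 (every fiber has size < κ). Then there exists a total function f : κ → κ which is < κ-to-1 and such that {f} ∪ F is κ-coherent. -/
open Cardinal Set
open scoped Classical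

universe u v

namespace ForestPaper

variable {X : Type u} {μ : Type v}

/-! Well-order `κ` and use it for the indices, the points and the values alike. At `x`, take the
value `v` of the first `f_β` with `β ≤ x` that is defined at `x`, but only if `x < c v`, where
`c v` bounds the `< κ` many points that the `f_γ` with `γ ≤ v` send to `v`; otherwise send `x`
to itself. The cap puts every fibre `f⁻¹{y}` below `max (c y) y`. If `x ≥ α` is a point where
`f` disagrees with `f_α`, then either `f_α` disagrees at `x` with the first `f_β` (and `β ≤ α`),
or `f_α x = v` with `x ≥ c v`, which forces `v < α`. By regularity each kind of point, and the
points below `α`, are `< κ` many. -/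

theorem exists_forall_lt_of_mk_lt_cof {α : Type u} [LinearOrder α] {s : Set α}
    (hs : #s < Order.cof α) : ∃ b, ∀ a ∈ s, a < b :=
  not_isCofinal_iff.1 fun h ↦ (Order.cof_le h).not_gt hs

theorem mk_union_lt {α : Type u} {κ : Cardinal.{u}} (hκ : ℵ₀ ≤ κ) {s t : Set α}
    (hs : #s < κ) (ht : #t < κ) : #(s ∪ t : Set α) < κ :=
  (mk_union_le s t).trans_lt (add_lt_of_lt hκ hs ht)

section CappedValue

variable {T : Type*} [LinearOrder T] [WellFoundedLT T] (F : T → T → Option T)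

noncomputable def leastValue (x : T) : Option T :=
  if h : {β | β ≤ x ∧ F β x ≠ none}.Nonempty then F (wellFounded_lt.min _ h) x else none

theorem exists_le_leastValue_eq {α x : T} (hαx : α ≤ x) (hα : F α x ≠ none) :
    ∃ β ≤ α, F β x ≠ none ∧ leastValue F x = F β x := by
  have hαS : α ∈ {β | β ≤ x ∧ F β x ≠ none} := ⟨hαx, hα⟩
  exact ⟨_, wellFounded_lt.min_le hαS, (wellFounded_lt.min_mem _ ⟨α, hαS⟩).2, dif_pos ⟨α, hαS⟩⟩

noncomputable def cappedValue (c : T → T) (x : T) : T :=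
  match leastValue F x with
  | some v => if x < c v then v else x
  | none => x

def BoundsFibres (c : T → T) : Prop :=
  ∀ y γ x, γ ≤ y → F γ x = some y → x < c y

variable {F} {c : T → T}

theorem cappedValue_of_lt {x v : T} (hv : leastValue F x = some v) (hx : x < c v) :
    cappedValue F c x = v := by
  simp [cappedValue, hv, hx]

theorem lt_or_eq_of_cappedValue_eq {x y : T} (h : cappedValue F c x = y) : x < c y ∨ x = y := by
  unfold cappedValue at h
  split at h
  · split_ifs at h with hx
    exacts [.inl (h ▸ hx), .inr h]
  · exact .inr h

theorem preimage_cappedValue_subset (y : T) : cappedValue F c ⁻¹' {y} ⊆ Iic (max (c y) y) := by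
  intro x hx
  rcases lt_or_eq_of_cappedValue_eq hx with h | rfl
  exacts [le_max_of_le_left h.le, le_max_right _ _]

theorem disagree_cappedValue_subset (hc : BoundsFibres F c) (α : T) :
    {x | F α x ≠ none ∧ F α x ≠ some (cappedValue F c x)} ⊆
      Iio α ∪ ((⋃ β ∈ Iic α, pdiff (F α) (F β)) ∪ ⋃ y ∈ Iio α, {x | F α x = some y}) := by
  rintro x ⟨hdom, hne⟩
  rcases lt_or_ge x α with hxα | hαx
  · exact .inl hxα
  obtain ⟨β, hβα, hβdom, hβ⟩ := exists_le_leastValue_eq F hαx hdom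
  by_cases hαβ : F α x = F β x
  · obtain ⟨v, hv⟩ := Option.ne_none_iff_exists'.mp hdom
    have hcap : ¬ x < c v := fun hx ↦
      hne (by rw [cappedValue_of_lt (hβ.trans (hαβ.symm.trans hv)) hx, hv])
    have hvα : v < α := lt_of_not_ge fun hαv ↦ hcap (hc v α x hαv hv)
    exact .inr (.inr (mem_biUnion hvα hv))
  · exact .inr (.inl (mem_biUnion hβα ⟨hdom, hβdom, hαβ⟩))

end CappedValue

section RegularToType

variable {κ : Cardinal.{u}}

theorem mk_Iio_ord_toType_lt (x : κ.ord.ToType) : #(Iio x) < κ := by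
  simpa using mk_Iio_lt x (by simp)

theorem mk_Iic_ord_toType_lt (hκ : ℵ₀ ≤ κ) (x : κ.ord.ToType) : #(Iic x) < κ := by
  simpa using mk_Iic_lt x (by simp) (by simpa using hκ)

theorem exists_forall_lt_of_mk_lt (hκ : κ.IsRegular) {s : Set κ.ord.ToType} (hs : #s < κ) :
    ∃ b, ∀ a ∈ s, a < b :=
  exists_forall_lt_of_mk_lt_cof (by rwa [Ordinal.cof_toType, hκ.cof_ord])

variable {F : κ.ord.ToType → κ.ord.ToType → Option κ.ord.ToType}

theorem exists_boundsFibres (hκ : κ.IsRegular) (hto1 : ∀ α, SmallTo1 κ (F α)) :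
    ∃ c : κ.ord.ToType → κ.ord.ToType, BoundsFibres F c := by
  have hfibres (y) : #(⋃ γ ∈ Iic y, {x | F γ x = some y}) < κ :=
    (card_biUnion_lt_iff_forall_of_isRegular hκ (mk_Iic_ord_toType_lt hκ.aleph0_le y)).2
      fun γ _ ↦ hto1 γ y
  choose c hc using fun y ↦ exists_forall_lt_of_mk_lt hκ (hfibres y)
  exact ⟨c, fun y γ x hγ hx ↦ hc y x (mem_biUnion hγ hx)⟩

theorem mk_preimage_cappedValue_lt (hκ : ℵ₀ ≤ κ) (c : κ.ord.ToType → κ.ord.ToType)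
    (y : κ.ord.ToType) : #(cappedValue F c ⁻¹' {y}) < κ :=
  (mk_le_mk_of_subset (preimage_cappedValue_subset y)).trans_lt (mk_Iic_ord_toType_lt hκ _)

theorem mk_disagree_cappedValue_lt (hκ : κ.IsRegular) (hcoh : ∀ α β, #(pdiff (F α) (F β)) < κ)
    (hto1 : ∀ α, SmallTo1 κ (F α)) {c : κ.ord.ToType → κ.ord.ToType}
    (hc : BoundsFibres F c) (α : κ.ord.ToType) :
    #{x | F α x ≠ none ∧ F α x ≠ some (cappedValue F c x)} < κ := by
  refine (mk_le_mk_of_subset (disagree_cappedValue_subset hc α)).trans_lt ?_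
  refine mk_union_lt hκ.aleph0_le (mk_Iio_ord_toType_lt α) (mk_union_lt hκ.aleph0_le ?_ ?_)
  · exact (card_biUnion_lt_iff_forall_of_isRegular hκ (mk_Iic_ord_toType_lt hκ.aleph0_le α)).2
      fun β _ ↦ hcoh α β
  · exact (card_biUnion_lt_iff_forall_of_isRegular hκ (mk_Iio_ord_toType_lt α)).2
      fun y _ ↦ hto1 α y

end RegularToType

/-- For `κ` regular and a `κ`-coherent family `⟨f_α : α < κ⟩` of `< κ`-to-1
partial functions from `κ` to `κ`, there is a total `< κ`-to-1 function
`f : κ → κ` cohering with every `f_α`. -/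
theorem stmt3 (κ : Cardinal.{u}) (hκ : κ.IsRegular)
    (F : κ.ord.ToType → (κ.ord.ToType → Option κ.ord.ToType))
    (hcoh : ∀ α β, #(pdiff (F α) (F β)) < κ)
    (hto1 : ∀ α, SmallTo1 κ (F α)) :
    ∃ f : κ.ord.ToType → κ.ord.ToType,
      (∀ y, #(f ⁻¹' {y}) < κ) ∧
      ∀ α, #{x | F α x ≠ none ∧ F α x ≠ some (f x)} < κ := by
  obtain ⟨c, hc⟩ := exists_boundsFibres hκ hto1
  exact ⟨cappedValue F c, mk_preimage_cappedValue_lt hκ.aleph0_le c,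
    mk_disagree_cappedValue_lt hκ hcoh hto1 hc⟩
end ForestPaper
end

section
/- If F is a coherent (κ⁺,X,μ)-forest closed under finite modifications with μ ≥ 2, and F contains a well-ordered ⊆-chain of order type κ⁺, then F contains an antichain of cardinality κ⁺. In particular, such an F is Suslin only if it is Aronszajn. -/
/-!
Along a strictly increasing chain `c` indexed by a linear order with successors and no
maximum (such as `κ⁺`), pick for each `i` a point `xᵢ` that enters the domain at the step
from `i` to `succ i`, and let `fᵢ` be `c (succ i)` with its value at `xᵢ` changed. For `i < j`, `fⱼ` still agrees with the chain at `xᵢ`, so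
`fᵢ` and `fⱼ` disagree at a common point and cannot have a common extension.
-/

open Cardinal Set
open scoped Classical

universe u v

namespace ForestPaper

variable {X : Type u} {μ : Type v}

lemma Ext.refl (f : X → Option μ) : Ext f f := fun _ _ => rfl

lemma exists_new_point_of_ext {f g : X → Option μ} (hext : Ext g f) (hne : f ≠ g) :
    ∃ x, f x = none ∧ g x ≠ none := by
  by_contra! h
  exact hne <| funext fun x => by
    by_cases hx : f x = none
    · rw [hx, h x hx]
    · exact (hext x hx).symm

lemma Compat.refl {F : Set (X → Option μ)} {f : X → Option μ} (hf : f ∈ F) : Compat F f f :=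
  ⟨f, hf, Ext.refl f, Ext.refl f⟩

lemma Compat.symm {F : Set (X → Option μ)} {f g : X → Option μ} (h : Compat F f g) :
    Compat F g f :=
  let ⟨k, hk, hkf, hkg⟩ := h
  ⟨k, hk, hkg, hkf⟩

lemma not_compat_of_ne_apply {F : Set (X → Option μ)} {f g : X → Option μ} {x : X}
    (hf : f x ≠ none) (hg : g x ≠ none) (hfg : f x ≠ g x) : ¬ Compat F f g :=
  fun ⟨_, _, hkf, hkg⟩ => hfg ((hkf x hf).symm.trans (hkg x hg))

lemma ClosedMod.update_mem {F : Set (X → Option μ)} (hmod : ClosedMod ℵ₀ F)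
    {f : X → Option μ} (hf : f ∈ F) {x : X} (hx : f x ≠ none) (y : μ) :
    Function.update f x (some y) ∈ F := by
  refine hmod f hf _ ?_ ?_
  · ext z
    by_cases hz : z = x
    · subst hz
      simp [pdom, hx]
    · simp [pdom, Function.update_of_ne hz]
  · have hsub : {z | f z ≠ Function.update f x (some y) z} ⊆ {x} := fun z hz => by
      by_contra hzx
      exact hz (Function.update_of_ne hzx _ _).symm
    calc #{z | f z ≠ Function.update f x (some y) z} ≤ #({x} : Set X) := mk_le_mk_of_subset hsub
      _ < ℵ₀ := by simp

lemma isAntichainIn_range {ι : Type*} {F : Set (X → Option μ)} {f : ι → X → Option μ}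
    (hfF : ∀ i, f i ∈ F) (hf : Pairwise fun i j => ¬ Compat F (f i) (f j)) :
    IsAntichainIn F (range f) := by
  refine ⟨range_subset_iff.2 hfF, ?_⟩
  rintro _ ⟨i, rfl⟩ _ ⟨j, rfl⟩ hne
  exact hf fun hij => hne (congrArg f hij)

lemma injective_of_pairwise_not_compat {ι : Type*} {F : Set (X → Option μ)}
    {f : ι → X → Option μ} (hfF : ∀ i, f i ∈ F) (hf : Pairwise fun i j => ¬ Compat F (f i) (f j)) :
    Function.Injective f := by
  intro i j hij
  by_contra hne
  exact hf hne (by rw [hij]; exact Compat.refl (hfF j))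

lemma exists_pairwise_not_compat_of_chain {ι : Type*} [LinearOrder ι] [SuccOrder ι]
    [NoMaxOrder ι] [Nontrivial μ] {F : Set (X → Option μ)} (hmod : ClosedMod ℵ₀ F)
    {c : ι → X → Option μ} (hcF : ∀ i, c i ∈ F)
    (hc : ∀ i j, i < j → Ext (c j) (c i) ∧ c i ≠ c j) :
    ∃ f : ι → X → Option μ, (∀ i, f i ∈ F) ∧ Pairwise fun i j => ¬ Compat F (f i) (f j) := by
  have hext : ∀ i j, i ≤ j → Ext (c j) (c i) := fun i j hij =>
    hij.eq_or_lt.elim (fun h => h ▸ Ext.refl _) fun h => (hc i j h).1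
  choose x hx_old hx_new using fun i : ι =>
    exists_new_point_of_ext (hc i _ (Order.lt_succ i)).1 (hc i _ (Order.lt_succ i)).2
  have hx_ne : ∀ i j, i < j → x i ≠ x j := fun i j hij hxx => hx_new i <| by
    rw [← hext _ j (Order.succ_le_of_lt hij) _ (hx_new i), hxx, hx_old j]
  have hchain_at : ∀ i j, i < j → c (Order.succ j) (x i) = c (Order.succ i) (x i) :=
    fun i j hij => hext _ _ (Order.succ_le_succ hij.le) _ (hx_new i)
  choose v hv using fun i => Option.ne_none_iff_exists'.1 (hx_new i)
  choose y hy using fun i => exists_ne (v i)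
  set f : ι → X → Option μ := fun i => Function.update (c (Order.succ i)) (x i) (some (y i))
  have hf_self : ∀ i, f i (x i) = some (y i) := fun i => Function.update_self _ _ _
  have hf_lt : ∀ i j, i < j → f j (x i) = c (Order.succ i) (x i) := fun i j hij =>
    (Function.update_of_ne (hx_ne i j hij) _ _).trans (hchain_at i j hij)
  have hincompat : ∀ i j, i < j → ¬ Compat F (f i) (f j) := fun i j hij =>
    not_compat_of_ne_apply (x := x i) (by simp [hf_self]) (by rw [hf_lt i j hij]; exact hx_new i)
      (by rw [hf_self, hf_lt i j hij, hv]; exact fun h => hy i (Option.some_injective _ h))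
  refine ⟨f, fun i => hmod.update_mem (hcF _) (hx_new i) _, fun i j hij => ?_⟩
  rcases hij.lt_or_gt with h | h
  · exact hincompat i j h
  · exact fun hc => hincompat j i h hc.symm

theorem stmt5_general {X μ : Type u} [Nontrivial μ] (κ : Cardinal.{u}) (hκ : ℵ₀ ≤ κ)
    (F : Set (X → Option μ))
    (hmod : ClosedMod ℵ₀ F)
    (hchain : HasChain (Order.succ κ).ord F) :
    ∃ A, IsAntichainIn F A ∧ #A = Order.succ κ := by
  obtain ⟨c, hcF, hc⟩ := hchain
  have := Cardinal.noMaxOrder (hκ.trans (Order.le_succ κ))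
  obtain ⟨f, hfF, hf⟩ := exists_pairwise_not_compat_of_chain hmod hcF hc
  refine ⟨range f, isAntichainIn_range hfF hf, ?_⟩
  rw [mk_range_eq _ (injective_of_pairwise_not_compat hfF hf), mk_toType, card_ord]

/-- If a coherent `(κ⁺,X,μ)`-forest with `μ ≥ 2`, closed under finite
modifications, contains a well-ordered `⊆`-chain of order type `κ⁺`, then it
contains an antichain of size `κ⁺` (so such a forest is Suslin only if it is
Aronszajn). -/
theorem stmt5 {X μ : Type u} [Nontrivial μ] (κ : Cardinal.{u}) (hκ : ℵ₀ ≤ κ)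
    (F : Set (X → Option μ)) (hF : IsForest (Order.succ κ) F)
    (hcoh : Coherent κ F) (hmod : ClosedMod ℵ₀ F)
    (hchain : HasChain (Order.succ κ).ord F) :
    ∃ A, IsAntichainIn F A ∧ #A = Order.succ κ :=
  stmt5_general κ hκ F hmod hchain

end ForestPaper
end

section
/- Let κ be a regular cardinal and F a coherent (κ⁺, λ, κ)-forest closed under < κ modifications. Then F, ordered by reverse extension, is (2^κ)⁺-Knaster: every subset of F of size (2^κ)⁺ contains a subset of size (2^κ)⁺ of pairwise compatible elements. -/
/-! Two members of `F` that agree on their common domain are compatible: extend one of them to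
the union of the two domains and overwrite it there by the other, which by coherence changes it
at `< κ` points. It thus suffices to find `(2^κ)⁺` members of `A` that pairwise agree.

Put `ν = 2^κ`, so that `ν^κ = ν`. Closing a set of size `ν` under `ν`-sized witnesses indexed by
its `≤ κ`-subsets shows that some `r` of size `≤ κ` has the property that, for every `B` of size
`≤ ν`, more than `ν` members of `A` have domain meeting `B` only inside `r`. A maximal subfamily
whose domains pairwise meet inside `r` then has more than `ν` members, and since there are only
`(κ + 1)^κ = ν` possible restrictions to `r`, more than `ν` of them share their restriction to
`r`; these pairwise agree. -/

open Cardinal Set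
open scoped Classical

universe u v

namespace ForestPaper

variable {X : Type u} {μ : Type v}

lemma exists_gt_of_mk_lt_cof {α : Type*} [LinearOrder α] {s : Set α} (hs : #s < Order.cof α) :
    ∃ a, ∀ b ∈ s, b < a := by
  by_contra! h
  exact (Order.cof_le h).not_gt hs

section CardinalBounds

variable {κ ν : Cardinal.{u}}

lemma exists_gt_of_mk_le (hκ : ℵ₀ ≤ κ) {s : Set (Order.succ κ).ord.ToType}
    (hs : #s ≤ κ) : ∃ ξ, ∀ η ∈ s, η < ξ :=
  exists_gt_of_mk_lt_cof <| by
    rw [Ordinal.cof_toType, (isRegular_succ hκ).cof_ord]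
    exact hs.trans_lt (Order.lt_succ κ)

lemma mk_iUnion_le_of_le {ι : Type u} (hν : ℵ₀ ≤ ν) {f : ι → Set X} (hι : #ι ≤ ν)
    (hf : ∀ i, #(f i) ≤ ν) : #(⋃ i, f i) ≤ ν :=
  (mk_iUnion_le f).trans ((mul_le_mul' hι (ciSup_le' hf)).trans (mul_eq_self hν).le)

lemma mk_bounded_subset_le_of_power_eq (hν0 : ℵ₀ ≤ ν) (hν : ν ^ κ = ν) {N : Set X}
    (hN : #N ≤ ν) : #{t : Set X // t ⊆ N ∧ #t ≤ κ} ≤ ν :=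
  (mk_bounded_subset_le N κ).trans (hν ▸ power_le_power_right (max_le hN hν0))

end CardinalBounds

section Closure

variable {κ ν : Cardinal.{u}} {Φ : Set X → Set X}

def closureStep (κ : Cardinal.{u}) (Φ : Set X → Set X) (N : Set X) : Set X :=
  N ∪ ⋃ t : {t : Set X // t ⊆ N ∧ #t ≤ κ}, Φ t

/-- The chain has length `κ⁺` so that, by regularity of `κ⁺`, every subset of size `≤ κ` of its
union already lies in the union of an initial segment. -/
noncomputable def closureChain (κ : Cardinal.{u}) (Φ : Set X → Set X) :
    (Order.succ κ).ord.ToType → Set X :=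
  wellFounded_lt.fix fun ξ chain => closureStep κ Φ (⋃ η : Iio ξ, chain η η.2)

lemma closureChain_eq (ξ : (Order.succ κ).ord.ToType) :
    closureChain κ Φ ξ = closureStep κ Φ (⋃ η : Iio ξ, closureChain κ Φ η) :=
  WellFounded.fix_eq _ _ _

lemma mk_closureStep_le (hν0 : ℵ₀ ≤ ν) (hν : ν ^ κ = ν) (hΦ : ∀ t, #(Φ t) ≤ ν)
    {N : Set X} (hN : #N ≤ ν) : #(closureStep κ Φ N) ≤ ν :=
  (mk_union_le _ _).trans <| add_le_of_le hν0 hN <|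
    mk_iUnion_le_of_le hν0 (mk_bounded_subset_le_of_power_eq hν0 hν hN) fun t => hΦ t

lemma mk_closureChain_le (hκν : κ < ν) (hν0 : ℵ₀ ≤ ν) (hν : ν ^ κ = ν)
    (hΦ : ∀ t, #(Φ t) ≤ ν) (ξ : (Order.succ κ).ord.ToType) : #(closureChain κ Φ ξ) ≤ ν := by
  induction ξ using WellFoundedLT.induction with
  | ind ξ ih =>
    rw [closureChain_eq]
    have hξ : #(Iio ξ) ≤ ν :=
      (Order.lt_succ_iff.1 ((mk_Iio_lt ξ (by simp)).trans_eq (mk_ord_toType _))).trans hκν.le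
    exact mk_closureStep_le hν0 hν hΦ (mk_iUnion_le_of_le hν0 hξ fun η => ih η η.2)

theorem exists_closed_set (hκ : ℵ₀ ≤ κ) (hκν : κ < ν) (hν : ν ^ κ = ν)
    (Φ : Set X → Set X) (hΦ : ∀ t, #(Φ t) ≤ ν) :
    ∃ M : Set X, #M ≤ ν ∧ ∀ t ⊆ M, #t ≤ κ → Φ t ⊆ M := by
  have hν0 : ℵ₀ ≤ ν := hκ.trans hκν.le
  have hlen : #(Order.succ κ).ord.ToType ≤ ν := by
    rw [mk_ord_toType]
    exact Order.succ_le_of_lt hκν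
  refine ⟨⋃ ξ, closureChain κ Φ ξ,
    mk_iUnion_le_of_le hν0 hlen (mk_closureChain_le hκν hν0 hν hΦ), fun t ht htκ => ?_⟩
  choose ξ hξ using fun x : t => mem_iUnion.1 (ht x.2)
  obtain ⟨ζ, hζ⟩ := exists_gt_of_mk_le hκ (s := range ξ) (mk_range_le.trans htκ)
  have htζ : t ⊆ ⋃ η : Iio ζ, closureChain κ Φ η := fun x hx =>
    mem_iUnion.2 ⟨⟨ξ ⟨x, hx⟩, hζ _ (mem_range_self _)⟩, hξ ⟨x, hx⟩⟩
  calc Φ t ⊆ closureStep κ Φ (⋃ η : Iio ζ, closureChain κ Φ η) :=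
        subset_union_of_subset_right
          (subset_iUnion (fun s : {s : Set X // s ⊆ _ ∧ #s ≤ κ} => Φ s) ⟨t, htζ, htκ⟩) _
    _ = closureChain κ Φ ζ := (closureChain_eq ζ).symm
    _ ⊆ ⋃ ξ, closureChain κ Φ ξ := subset_iUnion _ ζ

end Closure

section DeltaSystem

variable {ι : Type u} {κ ν : Cardinal.{u}}

/-- If no such `r` existed, choose witnesses `B r` and close under them: every `i` is then
caught by `r = S i ∩ M`, and there are only `ν ^ κ = ν` such `r`. -/
theorem exists_root (hκ : ℵ₀ ≤ κ) (hκν : κ < ν) (hν : ν ^ κ = ν) (S : ι → Set X)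
    (hS : ∀ i, #(S i) ≤ κ) (hι : ν < #ι) :
    ∃ r : Set X, #r ≤ κ ∧ ∀ B : Set X, #B ≤ ν → ν < #{i | S i ∩ B ⊆ r} := by
  have hν0 : ℵ₀ ≤ ν := hκ.trans hκν.le
  by_contra! hbad
  have : ∀ r : Set X, ∃ B : Set X, #B ≤ ν ∧ (#r ≤ κ → #{i | S i ∩ B ⊆ r} ≤ ν) := by
    intro r
    by_cases hr : #r ≤ κ
    · obtain ⟨B, hB, hBr⟩ := hbad r hr
      exact ⟨B, hB, fun _ => hBr⟩
    · exact ⟨∅, by simp, fun h => absurd h hr⟩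
  choose B hB hBr using this
  obtain ⟨M, hM, hMB⟩ := exists_closed_set hκ hκν hν B hB
  have hcover : (univ : Set ι) ⊆ ⋃ t : {t : Set X // t ⊆ M ∧ #t ≤ κ}, {i | S i ∩ B t ⊆ t} := by
    intro i _
    have hiM : #(S i ∩ M : Set X) ≤ κ := (mk_le_mk_of_subset inter_subset_left).trans (hS i)
    exact mem_iUnion.2 ⟨⟨S i ∩ M, inter_subset_right, hiM⟩,
      inter_subset_inter_right _ (hMB _ inter_subset_right hiM)⟩
  have := (mk_le_mk_of_subset hcover).trans <| mk_iUnion_le_of_le hν0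
    (mk_bounded_subset_le_of_power_eq hν0 hν hM) fun t => hBr t t.2.2
  rw [mk_univ] at this
  exact hι.not_ge this

theorem exists_pairwise_inter_subset (hκ : ℵ₀ ≤ κ) (hκν : κ < ν) (hν : ν ^ κ = ν)
    (S : ι → Set X) (hS : ∀ i, #(S i) ≤ κ) (hι : ν < #ι) :
    ∃ r : Set X, #r ≤ κ ∧ ∃ J : Set ι, ν < #J ∧ J.Pairwise fun i j => S i ∩ S j ⊆ r := by
  obtain ⟨r, hr, hroot⟩ := exists_root hκ hκν hν S hS hι
  obtain ⟨J, hJ⟩ := zorn_subset {J : Set ι | J.Pairwise fun i j => S i ∩ S j ⊆ r}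
    fun c hc hchain => ⟨⋃₀ c, (pairwise_sUnion hchain.directedOn).2 hc,
      fun _ => subset_sUnion_of_mem⟩
  refine ⟨r, hr, J, ?_, hJ.prop⟩
  by_contra! hJν
  have hB : #(⋃ j : J, S j) ≤ ν :=
    mk_iUnion_le_of_le (hκ.trans hκν.le) hJν fun j => (hS j).trans hκν.le
  obtain ⟨i, hi, hiJ⟩ : ∃ i, S i ∩ ⋃ j : J, S j ⊆ r ∧ i ∉ J := by
    by_contra! h
    exact (hroot _ hB).not_ge ((mk_le_mk_of_subset h).trans hJν)
  have hiS : ∀ j ∈ J, S i ∩ S j ⊆ r := fun j hj =>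
    (inter_subset_inter_right _ (subset_iUnion_of_subset ⟨j, hj⟩ subset_rfl)).trans hi
  have hinsert : (insert i J).Pairwise fun i j => S i ∩ S j ⊆ r :=
    hJ.prop.insert fun j hj _ => ⟨hiS j hj, inter_comm (S j) (S i) ▸ hiS j hj⟩
  exact hiJ (hJ.2 hinsert (subset_insert i J) (mem_insert i J))

end DeltaSystem

theorem exists_pairwise_agree {V : Type u} {κ ν : Cardinal.{u}} (hκ : ℵ₀ ≤ κ) (hκν : κ < ν)
    (hν : ν ^ κ = ν) (hV : #V ≤ ν) (A : Set (X → Option V)) (hA : ∀ f ∈ A, #(pdom f) ≤ κ)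
    (hAν : ν < #A) : ∃ B ⊆ A, ν < #B ∧ ∀ f ∈ B, ∀ g ∈ B, Agree f g := by
  have hν0 : ℵ₀ ≤ ν := hκ.trans hκν.le
  obtain ⟨r, hr, J, hJ, hJr⟩ :=
    exists_pairwise_inter_subset hκ hκν hν (fun f : A => pdom f.1) (fun f => hA f f.2) hAν
  have hres : #(r → Option V) < (Order.succ ν).ord.cof := by
    rw [(isRegular_succ hν0).cof_ord, Order.lt_succ_iff, ← power_def, mk_option, ← hν]
    exact (power_le_power_right (add_le_of_le hν0 hV (one_le_aleph0.trans hν0))).trans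
      (power_le_power_left (aleph0_pos.trans_le hν0).ne' hr)
  obtain ⟨v, hv⟩ := infinite_pigeonhole_card (fun f : J => fun x : r => f.1.1 x) (Order.succ ν)
    (Order.succ_le_of_lt hJ) (hν0.trans (Order.le_succ ν)) hres
  refine ⟨(fun f : J => f.1.1) '' ((fun f : J => fun x : r => f.1.1 x) ⁻¹' {v}),
    fun _ ⟨f, _, hf⟩ => hf ▸ f.1.2, ?_, ?_⟩
  · rw [mk_image_eq fun f g h => Subtype.val_injective (Subtype.val_injective h)]
    exact (Order.lt_succ ν).trans_le hv
  · rintro _ ⟨f, hf, rfl⟩ _ ⟨g, hg, rfl⟩ x hfx hgx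
    rcases eq_or_ne f.1 g.1 with hfg | hfg
    · show f.1.1 x = g.1.1 x
      rw [hfg]
    · have hx : x ∈ r := hJr f.2 g.2 hfg ⟨hfx, hgx⟩
      exact congrFun ((hf : _ = v).trans (hg : _ = v).symm) ⟨x, hx⟩

theorem compat_of_agree {κ : Cardinal.{u}} {F : Set (X → Option μ)} (hκ : ℵ₀ ≤ κ)
    (hF : IsForest (Order.succ κ) F) (hcoh : Coherent κ F) (hmod : ClosedMod κ F)
    {f g : X → Option μ} (hf : f ∈ F) (hg : g ∈ F) (hfg : Agree f g) : Compat F f g := by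
  have hunion : #(pdom f ∪ pdom g : Set X) < Order.succ κ :=
    Order.lt_succ_iff.2 <| (mk_union_le _ _).trans <| add_le_of_le hκ
      (Order.lt_succ_iff.1 (hF.dom_small f hf)) (Order.lt_succ_iff.1 (hF.dom_small g hg))
  obtain ⟨h, hh, hdom, hhf⟩ := hF.extend_mem f hf _ hunion subset_union_left
  have hgh : ∀ x, g x ≠ none → h x ≠ none := fun x hx =>
    (hdom.symm ▸ subset_union_right : pdom g ⊆ pdom h) hx
  -- overwrite `h` by `g` on the domain of `g`: by coherence this changes `h` at `< κ` points
  refine ⟨fun x => (g x).or (h x), hmod h hh _ ?_ ?_, fun x hx => ?_, fun x hx => ?_⟩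
  · ext x
    cases hgx : g x <;> simp [pdom, hgx, hgh x]
  · refine (mk_le_mk_of_subset fun x hx => ?_).trans_lt (hcoh h hh g hg)
    cases hgx : g x <;> simp_all [pdiff]
  · cases hgx : g x
    · simpa [hgx] using hhf x hx
    · simpa [hgx] using (hfg x hx (by simp [hgx])).symm
  · cases hgx : g x <;> simp_all

/-- A coherent `(κ⁺,λ,κ)`-forest closed under `< κ` modifications is
`(2^κ)⁺`-Knaster: any subset of size `(2^κ)⁺` has a pairwise compatible subset
of size `(2^κ)⁺`. -/
theorem stmt7 {X : Type u} (κ : Cardinal.{u}) (hκ : κ.IsRegular)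
    (F : Set (X → Option κ.ord.ToType)) (hF : IsForest (Order.succ κ) F)
    (hcoh : Coherent κ F) (hmod : ClosedMod κ F)
    (A : Set (X → Option κ.ord.ToType)) (hA : A ⊆ F)
    (hcard : #A = Order.succ (2 ^ κ)) :
    ∃ B ⊆ A, #B = Order.succ (2 ^ κ) ∧
      ∀ f ∈ B, ∀ g ∈ B, Compat F f g := by
  have hκ0 : ℵ₀ ≤ κ := hκ.aleph0_le
  have hpow : ((2 : Cardinal) ^ κ) ^ κ = 2 ^ κ := by rw [← power_mul, mul_eq_self hκ0]
  obtain ⟨B, hBA, hB, hagree⟩ := exists_pairwise_agree hκ0 (cantor κ) hpow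
    (by rw [mk_ord_toType]; exact (cantor κ).le) A
    (fun f hf => Order.lt_succ_iff.1 (hF.dom_small f (hA hf))) (hcard ▸ Order.lt_succ _)
  refine ⟨B, hBA, le_antisymm (hcard ▸ mk_le_mk_of_subset hBA) (Order.succ_le_of_lt hB), ?_⟩
  exact fun f hf g hg => compat_of_agree hκ0 hF hcoh hmod (hA (hBA hf)) (hA (hBA hg))
    (hagree f hf g hg)
end ForestPaper
end

section
/- If there exists a coherent (κ⁺, λ, κ)-forest consisting of injective functions, then there exists a family of λ many subsets of κ, each of cardinality κ, that are pairwise almost disjoint (any two have intersection of size < κ). -/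
/-!
Split `X` into `|X|` pairwise disjoint pieces `z i` of size `κ` and pick `f i ∈ F` with domain
`z i`; the sets `ran (f i)` have size `κ`. To see that `ran (f i) ∩ ran (f j)` is small, extend
`f i` to some `g ∈ F` defined on `z i ∪ z j`. If `f i a = f j b = w`, then `g a = w` and `a ≠ b`,
so injectivity of `g` forces `g b ≠ f j b`: every common value is taken by `f j` at a point where
`g` and `f j` disagree, and there are fewer than `κ` of those by coherence.
-/

open Cardinal Set
open scoped Classical

universe u v

namespace ForestPaper

variable {X : Type u} {μ : Type v}

section PartialFunctions

variable {μ : Type u} {f f' g : X → Option μ}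

lemma pran_eq_preimage_image_pdom (f : X → Option μ) : pran f = some ⁻¹' (f '' pdom f) := by
  ext y
  simp only [pran, pdom, mem_ofPred_eq, mem_preimage, mem_image]
  exact ⟨fun ⟨x, hx⟩ => ⟨x, by simp [hx], hx⟩, fun ⟨x, _, hx⟩ => ⟨x, hx⟩⟩

lemma PInj.injOn (hf : PInj f) : InjOn f (pdom f) :=
  fun x hx y _ hxy => hf x y hx hxy

lemma mk_pran_of_pInj (hf : PInj f) : #(pran f) = #(pdom f) := by
  have hsome : f '' pdom f ⊆ range some := by
    rintro _ ⟨x, hx, rfl⟩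
    exact Option.ne_none_iff_exists.mp hx
  rw [pran_eq_preimage_image_pdom, mk_preimage_of_injective_of_subset_range _ _
    (Option.some_injective μ) hsome, mk_image_eq_of_injOn _ _ hf.injOn]

lemma pran_inter_pran_subset (hg : PInj g) (hgf : Ext g f) (hf'g : pdom f' ⊆ pdom g)
    (hdisj : Disjoint (pdom f) (pdom f')) :
    pran f ∩ pran f' ⊆ some ⁻¹' (f' '' pdiff g f') := by
  rintro w ⟨⟨a, ha⟩, ⟨b, hb⟩⟩
  have ha' : a ∈ pdom f := by simp [pdom, ha]
  have hb' : b ∈ pdom f' := by simp [pdom, hb]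
  refine ⟨b, ⟨hf'g hb', hb', fun hgb => ?_⟩, hb⟩
  have hga : g a = some w := (hgf a ha').trans ha
  have hab : a = b := hg a b (by simp [hga]) (by rw [hga, hgb, hb])
  exact disjoint_left.mp hdisj ha' (hab ▸ hb')

lemma mk_pran_inter_pran_le_mk_pdiff (hg : PInj g) (hgf : Ext g f) (hf'g : pdom f' ⊆ pdom g)
    (hdisj : Disjoint (pdom f) (pdom f')) :
    #(pran f ∩ pran f' : Set μ) ≤ #(pdiff g f') :=
  calc #(pran f ∩ pran f' : Set μ)
      ≤ #(some ⁻¹' (f' '' pdiff g f')) :=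
        mk_le_mk_of_subset (pran_inter_pran_subset hg hgf hf'g hdisj)
    _ ≤ #(f' '' pdiff g f') := mk_preimage_of_injective _ _ (Option.some_injective μ)
    _ ≤ #(pdiff g f') := mk_image_le

end PartialFunctions

lemma IsForest.mk_pran_inter_pran_lt {μ : Type u} {κ : Cardinal.{u}} (hκ : ℵ₀ ≤ κ)
    {F : Set (X → Option μ)} (hF : IsForest (Order.succ κ) F) (hcoh : Coherent κ F)
    (hinj : ∀ f ∈ F, PInj f) {f f' : X → Option μ} (hf : f ∈ F) (hf' : f' ∈ F)
    (hdisj : Disjoint (pdom f) (pdom f')) :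
    #(pran f ∩ pran f' : Set μ) < κ := by
  have hunion : #(pdom f ∪ pdom f' : Set X) < Order.succ κ := by
    refine Order.lt_succ_iff.mpr ((mk_union_le _ _).trans ?_)
    calc #(pdom f) + #(pdom f')
        ≤ κ + κ := add_le_add (Order.le_of_lt_succ (hF.dom_small f hf))
          (Order.le_of_lt_succ (hF.dom_small f' hf'))
      _ = κ := add_eq_self hκ
  obtain ⟨g, hgF, hgdom, hgf⟩ := hF.extend_mem f hf _ hunion subset_union_left
  calc #(pran f ∩ pran f' : Set μ)
      ≤ #(pdiff g f') := mk_pran_inter_pran_le_mk_pdiff (hinj g hgF) hgf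
        (hgdom ▸ subset_union_right) hdisj
    _ < κ := hcoh g hgF f' hf'

lemma exists_pairwise_disjoint_mk_eq {κ : Cardinal.{u}} (hX : ℵ₀ ≤ #X)
    (hκX : κ ≤ #X) (hκ : κ ≠ 0) :
    ∃ z : X → Set X, (∀ i, #(z i) = κ) ∧ Pairwise fun i j => Disjoint (z i) (z j) := by
  obtain ⟨e⟩ : Nonempty (X × κ.out ≃ X) := by
    rw [← Cardinal.eq, mk_prod, lift_id, lift_id, mk_out]
    exact mul_eq_left hX hκX hκ
  have hinj : ∀ i, Function.Injective fun t => e (i, t) := fun i _ _ h =>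
    congrArg Prod.snd (e.injective h)
  refine ⟨fun i => range fun t => e (i, t), fun i => by rw [mk_range_eq _ (hinj i), mk_out], ?_⟩
  rintro i j hij
  refine disjoint_left.mpr ?_
  rintro _ ⟨s, rfl⟩ ⟨t, ht⟩
  exact hij (congrArg Prod.fst (e.injective ht)).symm

/-- If there is a coherent `(κ⁺,λ,κ)`-forest of injective functions, then there
are `λ` many subsets of `κ`, each of size `κ`, pairwise almost disjoint. -/
theorem stmt8 {X : Type u} (κ : Cardinal.{u}) (hκ : ℵ₀ ≤ κ)
    (hX : Order.succ κ ≤ #X)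
    (F : Set (X → Option κ.ord.ToType)) (hF : IsForest (Order.succ κ) F)
    (hcoh : Coherent κ F) (hinj : ∀ f ∈ F, PInj f) :
    ∃ A : X → Set κ.ord.ToType,
      (∀ i, #(A i) = κ) ∧ ∀ i j, i ≠ j → #(A i ∩ A j : Set _) < κ := by
  have hκX : κ ≤ #X := (Order.le_succ κ).trans hX
  obtain ⟨z, hz, hzdisj⟩ :=
    exists_pairwise_disjoint_mk_eq (hκ.trans hκX) hκX (aleph0_pos.trans_le hκ).ne'
  have hdom (i : X) : ∃ f ∈ F, pdom f = z i :=
    hF.exists_dom (z i) ((hz i).trans_lt (Order.lt_succ κ))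
  choose f hfF hfdom using hdom
  refine ⟨fun i => pran (f i), fun i => ?_, fun i j hij => ?_⟩
  · rw [mk_pran_of_pInj (hinj _ (hfF i)), hfdom i, hz i]
  · exact hF.mk_pran_inter_pran_lt hκ hcoh hinj (hfF i) (hfF j)
      (by rw [hfdom, hfdom]; exact hzdisj hij)

end ForestPaper
end

section
/- Assume the P-ideal dichotomy. Let λ ≥ ω₁ and let F be a coherent (ω₁, λ, 2)-forest closed under finite modifications. Then F is not Aronszajn: F contains a ⊆-well-ordered chain of order type ω₁. -/
/-!
Apply PID to the ideal of countable sets `D ⊆ X × 2` that are almost contained in the graph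
of a member of `F`. Coherence makes it a P-ideal: countably many such sets are almost
contained in the graph of any member whose domain covers all the witnesses' domains.
No countable partition of `X × 2` is orthogonal to it: as `X` is uncountable, the indices of
the pieces containing `(x, 0)` and `(x, 1)` are constant on some infinite countable set, and
the graph of a member of `F` with that domain would then be finite. So there is an uncountable
`B ⊆ X × 2` all of whose countable subsets lie in the ideal; some slice `{x | (x, b) ∈ B}` is
uncountable, and by closure under finite modifications every countable restriction of the
constant function `b` on it lies in `F`. Restricting it to an `ω₁`-sequence of increasing
countable sets gives the chain.
-/

open Cardinal Set
open scoped Classical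

universe u v

namespace ForestPaper

variable {X : Type u} {μ : Type v}

/-- `I` is a P-ideal on `Y`: an ideal containing all finite sets, consisting of
countable sets, and closed under pseudo-unions of countable subfamilies. -/
def IsPIdeal {Y : Type u} (I : Set (Set Y)) : Prop :=
  (∀ s : Set Y, s.Finite → s ∈ I) ∧
  (∀ s ∈ I, (s : Set Y).Countable) ∧
  (∀ s ∈ I, ∀ t : Set Y, t ⊆ s → t ∈ I) ∧
  (∀ s ∈ I, ∀ t ∈ I, s ∪ t ∈ I) ∧
  (∀ z : ℕ → Set Y, (∀ n, z n ∈ I) → ∃ w ∈ I, ∀ n, (z n \ w).Finite)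

/-- The P-ideal dichotomy. -/
def PIdealDichotomy : Prop :=
  ∀ (Y : Type u) (I : Set (Set Y)), IsPIdeal I →
    (∃ B : Set Y, ¬ B.Countable ∧ ∀ s : Set Y, s ⊆ B → s.Countable → s ∈ I) ∨
    (∃ P : ℕ → Set Y, (∀ y, ∃ n, y ∈ P n) ∧ ∀ n, ∀ s ∈ I, (s ∩ P n).Finite)

def pgraph (f : X → Option μ) : Set (X × μ) := {p | f p.1 = some p.2}

theorem injOn_fst_pgraph (f : X → Option μ) : (pgraph f).InjOn Prod.fst := by
  rintro ⟨x, b⟩ hb ⟨y, c⟩ hc (rfl : x = y)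
  simp_all [pgraph]

theorem image_fst_pgraph (f : X → Option μ) : Prod.fst '' pgraph f = pdom f := by
  ext x
  simp [pgraph, pdom, Option.ne_none_iff_exists']

theorem countable_pgraph_iff {f : X → Option μ} :
    (pgraph f).Countable ↔ (pdom f).Countable := by
  rw [← image_fst_pgraph]
  exact ⟨fun h => h.image _, countable_of_injective_of_countable_image (injOn_fst_pgraph f)⟩

theorem pdom_pres (f : X → Option μ) (z : Set X) : pdom (pres f z) = z ∩ pdom f := by
  ext x
  by_cases hx : x ∈ z <;> simp [pdom, pres, hx]

theorem pgraph_pres_subset (f : X → Option μ) (z : Set X) : pgraph (pres f z) ⊆ pgraph f := by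
  intro p hp
  by_cases hp1 : p.1 ∈ z <;> simp_all [pgraph, pres]

theorem ext_pres_of_subset (f : X → Option μ) {z z' : Set X} (h : z ⊆ z') :
    Ext (pres f z') (pres f z) := by
  intro x hx
  have hxz : x ∈ z := by
    by_contra hxz
    exact hx (if_neg hxz)
  simp [pres, hxz, h hxz]

theorem finite_pgraph_diff {f g : X → Option μ} (hdom : pdom f ⊆ pdom g)
    (hfg : (pdiff f g).Finite) : (pgraph f \ pgraph g).Finite := by
  refine Finite.of_finite_image (hfg.subset ?_) ((injOn_fst_pgraph f).mono sdiff_subset)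
  rintro _ ⟨⟨x, b⟩, ⟨hf, hg⟩, rfl⟩
  have hx : x ∈ pdom f := by simp_all [pdom, pgraph]
  exact ⟨hx, hdom hx, fun h => hg (h.symm.trans hf)⟩

theorem finite_diff_pgraph_of_pdom_subset {s : Set (X × μ)} {f g : X → Option μ}
    (hs : (s \ pgraph f).Finite) (hdom : pdom f ⊆ pdom g) (hfg : (pdiff f g).Finite) :
    (s \ pgraph g).Finite :=
  (hs.union (finite_pgraph_diff hdom hfg)).subset (sdiff_triangle s (pgraph f) (pgraph g))

theorem countable_iff_mk_lt_succ_aleph0 {z : Set X} : z.Countable ↔ #z < Order.succ ℵ₀ := by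
  rw [Order.lt_succ_iff, le_aleph0_iff_set_countable]

theorem IsForest.countable_pdom {F : Set (X → Option μ)} (hF : IsForest (Order.succ ℵ₀) F)
    {f : X → Option μ} (hf : f ∈ F) : (pdom f).Countable :=
  countable_iff_mk_lt_succ_aleph0.mpr (hF.dom_small f hf)

theorem IsForest.exists_pdom_eq {F : Set (X → Option μ)} (hF : IsForest (Order.succ ℵ₀) F)
    {z : Set X} (hz : z.Countable) : ∃ f ∈ F, pdom f = z :=
  hF.exists_dom z (countable_iff_mk_lt_succ_aleph0.mp hz)

theorem Coherent.finite_pdiff {F : Set (X → Option μ)} (hcoh : Coherent ℵ₀ F)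
    {f g : X → Option μ} (hf : f ∈ F) (hg : g ∈ F) : (pdiff f g).Finite :=
  lt_aleph0_iff_set_finite.mp (hcoh f hf g hg)

def graphIdeal (F : Set (X → Option μ)) : Set (Set (X × μ)) :=
  {D | D.Countable ∧ ∃ f ∈ F, (D \ pgraph f).Finite}

theorem isPIdeal_graphIdeal {F : Set (X → Option μ)} (hF : IsForest (Order.succ ℵ₀) F)
    (hcoh : Coherent ℵ₀ F) : IsPIdeal (graphIdeal F) := by
  refine ⟨fun s hs => ?_, fun s hs => hs.1, fun s hs t hts => ?_, fun s hs t ht => ?_,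
    fun z hz => ?_⟩
  · obtain ⟨f, hf, -⟩ := hF.exists_pdom_eq countable_empty
    exact ⟨hs.countable, f, hf, hs.sdiff⟩
  · obtain ⟨hsc, f, hf, hsf⟩ := hs
    exact ⟨hsc.mono hts, f, hf, hsf.subset (sdiff_subset_sdiff_left hts)⟩
  · obtain ⟨hsc, f, hf, hsf⟩ := hs
    obtain ⟨g, hg, htg⟩ := ht.2
    obtain ⟨h, hh, hdom⟩ :=
      hF.exists_pdom_eq ((hF.countable_pdom hf).union (hF.countable_pdom hg))
    refine ⟨hsc.union ht.1, h, hh, ?_⟩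
    rw [union_sdiff_distrib]
    exact (finite_diff_pgraph_of_pdom_subset hsf (hdom ▸ subset_union_left)
      (hcoh.finite_pdiff hf hh)).union (finite_diff_pgraph_of_pdom_subset htg
      (hdom ▸ subset_union_right) (hcoh.finite_pdiff hg hh))
  · choose f hf hzf using fun n => (hz n).2
    obtain ⟨h, hh, hdom⟩ :=
      hF.exists_pdom_eq (countable_iUnion fun n => hF.countable_pdom (hf n))
    refine ⟨(⋃ n, z n) ∩ pgraph h,
      ⟨(countable_iUnion fun n => (hz n).1).mono inter_subset_left, h, hh,
        finite_empty.subset fun p hp => hp.2 hp.1.2⟩, fun n => ?_⟩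
    refine (finite_diff_pgraph_of_pdom_subset (hzf n)
      (hdom ▸ subset_iUnion (fun i => pdom (f i)) n) (hcoh.finite_pdiff (hf n) hh)).subset ?_
    rintro p ⟨hpz, hph⟩
    exact ⟨hpz, fun hp => hph ⟨mem_iUnion_of_mem n hpz, hp⟩⟩

theorem mem_of_pgraph_mem_graphIdeal {F : Set (X → Option μ)}
    (hF : IsForest (Order.succ ℵ₀) F) (hcoh : Coherent ℵ₀ F) (hmod : ClosedMod ℵ₀ F)
    {h : X → Option μ} (hh : pgraph h ∈ graphIdeal F) : h ∈ F := by
  obtain ⟨hc, f, hf, hhf⟩ := hh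
  obtain ⟨f₀, hf₀, hdom⟩ := hF.exists_pdom_eq (countable_pgraph_iff.mp hc)
  refine hmod f₀ hf₀ h hdom.symm (lt_aleph0_iff_set_finite.mpr ?_)
  refine ((hhf.image Prod.fst).union (hcoh.finite_pdiff hf₀ hf)).subset fun x hx => ?_
  have hxh : x ∈ pdom h := by
    by_contra hxh
    have hxf₀ : x ∉ pdom f₀ := hdom ▸ hxh
    simp only [pdom, mem_ofPred_eq, not_not] at hxh hxf₀
    exact hx (hxf₀.trans hxh.symm)
  obtain ⟨b, hb⟩ := Option.ne_none_iff_exists'.mp hxh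
  by_cases hfx : f x = some b
  · exact Or.inr ⟨(hdom ▸ hxh : x ∈ pdom f₀), by simp [hfx], by rwa [hfx, ← hb]⟩
  · exact Or.inl ⟨(x, b), ⟨hb, hfx⟩, rfl⟩

theorem hasChain_of_countable_pres_mem {F : Set (X → Option μ)} {g : X → Option μ}
    (hg : ¬ (pdom g).Countable) (hgF : ∀ z ⊆ pdom g, z.Countable → pres g z ∈ F) :
    HasChain (Order.succ ℵ₀).ord F := by
  obtain ⟨ι⟩ : Nonempty ((Order.succ ℵ₀ : Cardinal.{u}).ord.ToType ↪ pdom g) := by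
    rw [← Cardinal.le_def, mk_ord_toType]
    exact Order.succ_le_of_lt (lt_of_not_ge fun h => hg (le_aleph0_iff_set_countable.mp h))
  let u : (Order.succ ℵ₀ : Cardinal.{u}).ord.ToType → Set X :=
    fun i => (fun k => ↑(ι k)) '' Iio i
  have hu : ∀ i, u i ⊆ pdom g := by
    rintro i _ ⟨k, -, rfl⟩
    exact (ι k).2
  have huc : ∀ i, (u i).Countable := fun i =>
    (countable_iff_mk_lt_succ_aleph0.mpr (by simpa using mk_Iio_lt i)).image _
  refine ⟨fun i => pres g (u i), fun i => hgF _ (hu i) (huc i), fun i j hij =>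
    ⟨ext_pres_of_subset g (image_mono (Iio_subset_Iio hij.le)), fun heq => ?_⟩⟩
  replace heq : pres g (u i) = pres g (u j) := heq
  have hi : (ι i : X) ∈ pdom (pres g (u j)) := by
    rw [pdom_pres]
    exact ⟨⟨i, hij, rfl⟩, (ι i).2⟩
  rw [← heq, pdom_pres] at hi
  obtain ⟨⟨k, hk, hki⟩, -⟩ := hi
  rw [ι.injective (Subtype.ext hki)] at hk
  exact lt_irrefl i hk

theorem exists_not_countable_slice [Countable μ] {B : Set (X × μ)} (hB : ¬ B.Countable) :
    ∃ b, ¬ {x | (x, b) ∈ B}.Countable := by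
  by_contra! h
  refine hB ((countable_iUnion fun b => (h b).image fun x => (x, b)).mono ?_)
  rintro ⟨x, b⟩ hxb
  exact mem_iUnion_of_mem b ⟨x, hxb, rfl⟩

theorem hasChain_of_forall_countable_subset_mem_graphIdeal [Countable μ]
    {F : Set (X → Option μ)} (hF : IsForest (Order.succ ℵ₀) F) (hcoh : Coherent ℵ₀ F)
    (hmod : ClosedMod ℵ₀ F) {B : Set (X × μ)} (hB : ¬ B.Countable)
    (hBI : ∀ s ⊆ B, s.Countable → s ∈ graphIdeal F) :
    HasChain (Order.succ ℵ₀).ord F := by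
  obtain ⟨b, hb⟩ := exists_not_countable_slice hB
  let g : X → Option μ := fun x => if (x, b) ∈ B then some b else none
  have hdom : pdom g = {x | (x, b) ∈ B} := by
    ext x
    by_cases hx : (x, b) ∈ B <;> simp [g, pdom, hx]
  have hgB : pgraph g ⊆ B := by
    rintro ⟨x, c⟩ hx
    by_cases hxb : (x, b) ∈ B <;> simp_all [g, pgraph]
  refine hasChain_of_countable_pres_mem (hdom ▸ hb) fun z _ hz =>
    mem_of_pgraph_mem_graphIdeal hF hcoh hmod (hBI _ ((pgraph_pres_subset g z).trans hgB)
      (countable_pgraph_iff.mpr (hz.mono ?_)))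
  rw [pdom_pres]
  exact inter_subset_left

theorem not_exists_cover_finite_inter_graphIdeal [Finite μ] (hX : ¬ Countable X)
    {F : Set (X → Option μ)} (hF : IsForest (Order.succ ℵ₀) F) :
    ¬ ∃ P : ℕ → Set (X × μ), (∀ p, ∃ n, p ∈ P n) ∧
      ∀ n, ∀ s ∈ graphIdeal F, (s ∩ P n).Finite := by
  rintro ⟨P, hcov, hP⟩
  choose n hn using hcov
  obtain ⟨k, hk⟩ : ∃ k : μ → ℕ, ¬ ((fun x b => n (x, b)) ⁻¹' {k}).Countable := by
    by_contra! h
    exact hX (countable_univ_iff.mp ((countable_iUnion h).mono fun x _ =>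
      mem_iUnion.mpr ⟨fun b => n (x, b), rfl⟩))
  obtain ⟨u, huk, huc, huinf⟩ :=
    Infinite.exists_subset_countable_infinite fun h => hk h.countable
  obtain ⟨f, hf, hfu⟩ := hF.exists_pdom_eq huc
  have hfI : pgraph f ∈ graphIdeal F :=
    ⟨countable_pgraph_iff.mpr (hfu ▸ huc), f, hf, by simp⟩
  have hfin : (pgraph f).Finite := by
    refine (finite_iUnion fun b => hP (k b) _ hfI).subset fun p hp =>
      mem_iUnion.mpr ⟨p.2, hp, ?_⟩
    have hp1 : p.1 ∈ u := hfu ▸ (show f p.1 ≠ none by simp_all [pgraph])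
    exact congrFun (huk hp1) p.2 ▸ hn p
  exact huinf (hfu ▸ image_fst_pgraph f ▸ hfin.image Prod.fst)

/-- Under PID, a coherent `(ω₁,λ,2)`-forest closed under finite modifications is
not Aronszajn: it contains a `⊆`-well-ordered chain of order type `ω₁`. -/
theorem stmt10 {X : Type u} (hPID : PIdealDichotomy.{u})
    (hX : Order.succ ℵ₀ ≤ #X)
    (F : Set (X → Option Bool)) (hF : IsForest (Order.succ ℵ₀) F)
    (hcoh : Coherent ℵ₀ F) (hmod : ClosedMod ℵ₀ F) :
    HasChain (Order.succ ℵ₀).ord F := by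
  have hXunc : ¬ Countable X := fun h =>
    (Order.lt_succ ℵ₀).not_ge (hX.trans (mk_le_aleph0_iff.mpr h))
  rcases hPID (X × Bool) (graphIdeal F) (isPIdeal_graphIdeal hF hcoh) with ⟨B, hB, hBI⟩ | hP
  · exact hasChain_of_forall_countable_subset_mem_graphIdeal hF hcoh hmod hB hBI
  · exact (not_exists_cover_finite_inter_graphIdeal hXunc hF hP).elim
end ForestPaper
end

section
/- Let κ be a regular cardinal and let F be a Suslin (κ,λ,μ)-forest. Then F is κ-distributive: for any δ < κ and any sequence ⟨A_α : α < δ⟩ of maximal antichains contained in F, there exists a single maximal antichain in F refining every A_α (namely F_z for a suitable z of size < κ). -/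
open Cardinal Set
open scoped Classical

universe u v

namespace ForestPaper

variable {X : Type u} {μ : Type v}

/-!
Let `z` be the union of the domains of all members of all the `A i`. By the Suslin property
each `A i` has size `< κ`, so regularity gives `#z < κ`. The level `F_z` is a maximal
antichain, and each `f ∈ F_z`, being compatible with some `g ∈ A i` whose domain lies in
`z = dom f`, already extends `g`.
-/

/-- The level `F_z` of `F`. -/
def level (F : Set (X → Option μ)) (z : Set X) : Set (X → Option μ) :=
  {f ∈ F | pdom f = z}

variable {F : Set (X → Option μ)}

theorem ext_pres_self (f : X → Option μ) (z : Set X) : Ext f (pres f z) := by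
  intro x hx
  by_cases hxz : x ∈ z <;> simp_all [pres]

theorem pdom_pres_of_subset {f : X → Option μ} {z : Set X} (hz : z ⊆ pdom f) :
    pdom (pres f z) = z := by
  ext x
  by_cases hxz : x ∈ z
  · simpa [pdom, pres, hxz] using hz hxz
  · simp [pdom, pres, hxz]

theorem eq_of_ext_of_pdom_eq {f g h : X → Option μ} (hf : Ext h f) (hg : Ext h g)
    (hfg : pdom f = pdom g) : f = g := by
  funext x
  have hmem : f x ≠ none ↔ g x ≠ none := Set.ext_iff.1 hfg x
  by_cases hx : f x = none
  · rw [hx, not_not.1 fun hgx => hmem.2 hgx hx]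
  · rw [← hf x hx, hg x (hmem.1 hx)]

theorem isAntichainIn_level (z : Set X) : IsAntichainIn F (level F z) :=
  ⟨fun _ hf => hf.1, fun _ hf _ hg hne ⟨_, _, hhf, hhg⟩ =>
    hne (eq_of_ext_of_pdom_eq hhf hhg (hf.2.trans hg.2.symm))⟩

theorem IsForest.isMaxAntichainIn_level {c : Cardinal.{u}} (hF : IsForest c F)
    (hc : ℵ₀ ≤ c) {z : Set X} (hz : #z < c) : IsMaxAntichainIn F (level F z) := by
  refine ⟨isAntichainIn_level z, fun f hf => ?_⟩
  have hcard : #(pdom f ∪ z : Set X) < c :=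
    (mk_union_le _ _).trans_lt (add_lt_of_lt hc (hF.dom_small f hf) hz)
  obtain ⟨g, hg, hgdom, hgf⟩ := hF.extend_mem f hf _ hcard subset_union_left
  have hzg : z ⊆ pdom g := hgdom ▸ subset_union_right
  exact ⟨pres g z, ⟨hF.restrict_mem g hg z hzg, pdom_pres_of_subset hzg⟩,
    g, hg, hgf, ext_pres_self g z⟩

theorem IsMaxAntichainIn.exists_ext_of_pdom_subset {A : Set (X → Option μ)}
    (hA : IsMaxAntichainIn F A) {f : X → Option μ} (hf : f ∈ F)
    (hAf : ∀ g ∈ A, pdom g ⊆ pdom f) : ∃ g ∈ A, Ext f g := by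
  obtain ⟨g, hg, h, -, hhf, hhg⟩ := hA.2 f hf
  exact ⟨g, hg, fun x hgx => by rw [← hhf x (hAf g hg hgx), hhg x hgx]⟩

/-- A Suslin `(κ,λ,μ)`-forest is `κ`-distributive: fewer than `κ` many maximal
antichains admit a common maximal refinement. -/
theorem stmt12 {X μ ι : Type u} (κ : Cardinal.{u}) (hκ : κ.IsRegular)
    (F : Set (X → Option μ)) (hF : IsForest κ F)
    (hSus : ∀ A, IsAntichainIn F A → #A < κ)
    (hι : #ι < κ) (A : ι → Set (X → Option μ))
    (hA : ∀ i, IsMaxAntichainIn F (A i)) :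
    ∃ M, IsMaxAntichainIn F M ∧ ∀ f ∈ M, ∀ i, ∃ g ∈ A i, Ext f g := by
  set z : Set X := ⋃ i, ⋃ g ∈ A i, pdom g
  have hz : #z < κ := by
    refine (card_iUnion_lt_iff_forall_of_isRegular hκ hι).2 fun i => ?_
    refine (card_biUnion_lt_iff_forall_of_isRegular hκ (hSus _ (hA i).1)).2 fun g hg => ?_
    exact hF.dom_small g ((hA i).1.1 hg)
  refine ⟨level F z, hF.isMaxAntichainIn_level hκ.aleph0_le hz, fun f ⟨hf, hfz⟩ i => ?_⟩
  refine (hA i).exists_ext_of_pdom_subset hf fun g hg => ?_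
  rw [hfz]
  exact fun x hx => mem_iUnion.2 ⟨i, mem_iUnion₂.2 ⟨g, hg, hx⟩⟩
end ForestPaper
end

section
/- Let κ be a regular cardinal and let F be a Suslin (κ,λ,μ)-forest. Then for any sequence ⟨A_α : α < δ⟩ of maximal antichains in F with δ < κ, the set z = ⋃_α ⋃{dom(f) : f ∈ A_α} has size < κ, and every g ∈ F with dom(g) = z extends exactly one element of each A_α. -/
open Cardinal Set
open scoped Classical

universe u v

namespace ForestPaper

variable {X : Type u} {μ : Type v}

/-! A member of a maximal antichain is compatible with `g`; once `g` is defined on the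
whole domain of that member, the common extension forces `g` itself to extend it, and two
members of an antichain extended by the same `g ∈ F` are compatible, hence equal. The size
bound is regularity of `κ` applied twice: fewer than `κ` antichains, each of size `< κ` by
the Suslin property, each member with domain of size `< κ`. -/

theorem Ext.of_common_extension {g h a : X → Option μ} (hhg : Ext h g) (hha : Ext h a)
    (hdom : pdom a ⊆ pdom g) : Ext g a := fun x hx => by
  rw [← hhg x (hdom hx), hha x hx]

theorem IsAntichainIn.eq_of_ext {F A : Set (X → Option μ)} (hA : IsAntichainIn F A)
    {g a b : X → Option μ} (hg : g ∈ F) (ha : a ∈ A) (hb : b ∈ A) (hga : Ext g a)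
    (hgb : Ext g b) : a = b :=
  by_contra fun hne => hA.2 a ha b hb hne ⟨g, hg, hga, hgb⟩

theorem IsMaxAntichainIn.existsUnique_ext {F A : Set (X → Option μ)}
    (hA : IsMaxAntichainIn F A) {g : X → Option μ} (hg : g ∈ F)
    (hdom : ∀ a ∈ A, pdom a ⊆ pdom g) : ∃! a, a ∈ A ∧ Ext g a := by
  obtain ⟨a, ha, h, -, hhg, hha⟩ := hA.2 g hg
  have hga : Ext g a := Ext.of_common_extension hhg hha (hdom a ha)
  exact ⟨a, ⟨ha, hga⟩, fun b ⟨hb, hgb⟩ => hA.1.eq_of_ext hg hb ha hgb hga⟩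

theorem card_iUnion_pdom_lt {X μ ι : Type u} {κ : Cardinal.{u}} (hκ : κ.IsRegular)
    (hι : #ι < κ) {A : ι → Set (X → Option μ)} (hA : ∀ i, #(A i) < κ)
    (hdom : ∀ i, ∀ f ∈ A i, #(pdom f) < κ) :
    #({x | ∃ i, ∃ f ∈ A i, x ∈ pdom f} : Set X) < κ := by
  have hz : ({x | ∃ i, ∃ f ∈ A i, x ∈ pdom f} : Set X) = ⋃ i, ⋃ f ∈ A i, pdom f := by
    ext x; simp only [mem_ofPred_eq, mem_iUnion, exists_prop]
  rw [hz, card_iUnion_lt_iff_forall_of_isRegular hκ hι]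
  exact fun i => (card_biUnion_lt_iff_forall_of_isRegular hκ (hA i)).2 (hdom i)

/-- In a Suslin `(κ,λ,μ)`-forest, for fewer than `κ` many maximal antichains
`⟨A_i⟩`, the union `z` of the domains of their members has size `< κ`, and every
member of `F` with domain `z` extends exactly one element of each `A_i`. -/
theorem stmt13 {X μ ι : Type u} (κ : Cardinal.{u}) (hκ : κ.IsRegular)
    (F : Set (X → Option μ)) (hF : IsForest κ F)
    (hSus : ∀ A, IsAntichainIn F A → #A < κ)
    (hι : #ι < κ) (A : ι → Set (X → Option μ))
    (hA : ∀ i, IsMaxAntichainIn F (A i)) :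
    #({x | ∃ i, ∃ f ∈ A i, x ∈ pdom f} : Set X) < κ ∧
    ∀ g ∈ F, pdom g = {x | ∃ i, ∃ f ∈ A i, x ∈ pdom f} →
      ∀ i, ∃! a, a ∈ A i ∧ Ext g a := by
  refine ⟨card_iUnion_pdom_lt hκ hι (fun i => hSus _ (hA i).1)
    (fun i f hf => hF.dom_small f ((hA i).1.1 hf)), ?_⟩
  intro g hg hdom i
  refine (hA i).existsUnique_ext hg fun a ha x hx => ?_
  rw [hdom]
  exact ⟨i, a, ha, hx⟩
end ForestPaper
end

section
/- The ordinal Cohen forcing for adding a subset of λ with conditions of size ≤ κ: the set ℙ of partial functions from λ to 2 of size ≤ κ, ordered by f ≤ g iff dom(f) ⊇ dom(g) and |{α ∈ dom(g) : f(α) ≠ g(α)}| < κ, is a transitive preorder that is κ⁺-closed: every ≤-decreasing sequence of length ≤ κ has a lower bound. -/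
/-!
Any `≤ κ` many pairwise `κ`-coherent partial functions `cᵢ` have a common `κ`-coherent
extension: enumerate the index set in type `κ` and at each point `x` copy the value of the
first `cᵢ` defined at `x`. Where this differs from `cᵢ`, it agrees with some `cⱼ` enumerated
no later than `cᵢ`; by regularity these `< κ` many disagreement sets of size `< κ` have a
union of size `< κ`. A decreasing sequence of length `< κ⁺` is such a family, and the
extension is a lower bound for it.
-/

open Cardinal Set
open scoped Classical

universe u v

namespace ForestPaper

variable {X : Type u} {μ : Type v}

/-- The ordering of the "Cohen with `< κ` disagreement" forcing: `f ≤ g` iff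
`dom f ⊇ dom g` and `f` disagrees with `g` at fewer than `κ` points of `dom g`. -/
def CoLE {X : Type u} (κ : Cardinal.{u}) (f g : X → Option Bool) : Prop :=
  pdom g ⊆ pdom f ∧ #{x | g x ≠ none ∧ f x ≠ g x} < κ

lemma pdiff_comm (f g : X → Option μ) : pdiff f g = pdiff g f := by
  ext x
  simp only [pdiff, mem_ofPred_eq]
  tauto

lemma mk_iUnion_le_of_le_s15 {I : Type u} {κ : Cardinal.{u}} (hκ : ℵ₀ ≤ κ) (hI : #I ≤ κ)
    (s : I → Set X) (hs : ∀ i, #(s i) ≤ κ) : #(⋃ i, s i) ≤ κ :=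
  calc #(⋃ i, s i) ≤ #I * ⨆ i, #(s i) := mk_iUnion_le s
    _ ≤ κ * κ := mul_le_mul' hI (ciSup_le' hs)
    _ = κ := mul_eq_self hκ

theorem exists_coherent_extension {I : Type u} {κ : Cardinal.{u}} (hκ : κ.IsRegular)
    (hI : #I ≤ κ) (c : I → X → Option μ) (hc : Coherent κ (range c)) :
    ∃ f : X → Option μ, pdom f = ⋃ i, pdom (c i) ∧
      ∀ i, #{x | c i x ≠ none ∧ f x ≠ c i x} < κ := by
  obtain ⟨ι⟩ : Nonempty (I ↪ κ.ord.ToType) := by rwa [← le_def, mk_ord_toType]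
  let first (x : X) (hx : {i | c i x ≠ none}.Nonempty) : I :=
    Function.argminOn ι {i | c i x ≠ none} hx
  let f : X → Option μ := fun x => if hx : {i | c i x ≠ none}.Nonempty then c (first x hx) x
    else none
  have hf : ∀ x i, c i x ≠ none → ∃ j, ι j ≤ ι i ∧ c j x ≠ none ∧ f x = c j x := by
    intro x i hi
    have hx : {i | c i x ≠ none}.Nonempty := ⟨i, hi⟩
    exact ⟨first x hx, Function.argminOn_le ι _ hi, Function.argminOn_mem ι _ hx, dif_pos hx⟩
  refine ⟨f, ?_, fun i => ?_⟩
  · ext x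
    simp only [pdom, mem_iUnion, mem_ofPred_eq]
    constructor
    · intro hx
      by_contra! h
      exact hx (dif_neg fun ⟨i, hi⟩ => hi (h i))
    · rintro ⟨i, hi⟩
      obtain ⟨j, -, hj, hfj⟩ := hf x i hi
      rwa [hfj]
  · let earlier := ι ⁻¹' Iic (ι i)
    have hearlier : #earlier < κ := by
      refine (mk_preimage_of_injective ι _ ι.injective).trans_lt ?_
      simpa using mk_Iic_lt (ι i) (by simp) (by simpa using hκ.aleph0_le)
    have hsub : {x | c i x ≠ none ∧ f x ≠ c i x} ⊆ ⋃ j : earlier, pdiff (c j) (c i) := by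
      rintro x ⟨hi, hfi⟩
      obtain ⟨j, hji, hj, hfj⟩ := hf x i hi
      exact mem_iUnion.mpr ⟨⟨j, hji⟩, hj, hi, hfj ▸ hfi⟩
    refine (mk_le_mk_of_subset hsub).trans_lt ?_
    rw [card_iUnion_lt_iff_forall_of_isRegular hκ hearlier]
    exact fun j => hc _ (mem_range_self _) _ (mem_range_self _)

lemma coLE_refl {κ : Cardinal.{u}} (hκ : κ ≠ 0) (f : X → Option Bool) : CoLE κ f f := by
  simpa [CoLE, pos_iff_ne_zero] using hκ

lemma coLE_trans {κ : Cardinal.{u}} (hκ : ℵ₀ ≤ κ) {f g h : X → Option Bool}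
    (hfg : CoLE κ f g) (hgh : CoLE κ g h) : CoLE κ f h := by
  refine ⟨hgh.1.trans hfg.1, ?_⟩
  have hsub : {x | h x ≠ none ∧ f x ≠ h x} ⊆
      {x | h x ≠ none ∧ g x ≠ h x} ∪ {x | g x ≠ none ∧ f x ≠ g x} := by
    rintro x ⟨hx, hfx⟩
    by_cases hgx : g x = h x
    · exact Or.inr ⟨hgx ▸ hx, hgx ▸ hfx⟩
    · exact Or.inl ⟨hx, hgx⟩
  exact (mk_le_mk_of_subset hsub).trans_lt
    ((mk_union_le _ _).trans_lt (add_lt_of_lt hκ hgh.2 hfg.2))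

lemma CoLE.mk_pdiff_lt {κ : Cardinal.{u}} {f g : X → Option Bool} (hfg : CoLE κ f g) :
    #(pdiff f g) < κ := by
  refine (mk_le_mk_of_subset ?_).trans_lt hfg.2
  exact fun _ hx => ⟨hx.2.1, hx.2.2⟩

lemma coherent_range_of_antitone {I : Type u} [LinearOrder I] {κ : Cardinal.{u}} (hκ : κ ≠ 0)
    (c : I → X → Option Bool) (hc : ∀ i j, i < j → CoLE κ (c j) (c i)) :
    Coherent κ (range c) := by
  rintro _ ⟨i, rfl⟩ _ ⟨j, rfl⟩
  rcases lt_trichotomy i j with hij | rfl | hij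
  · exact pdiff_comm (c i) (c j) ▸ (hc i j hij).mk_pdiff_lt
  · exact (coLE_refl hκ (c i)).mk_pdiff_lt
  · exact (hc j i hij).mk_pdiff_lt

theorem exists_coLE_lower_bound {I : Type u} [LinearOrder I] {κ : Cardinal.{u}}
    (hκ : κ.IsRegular) (hI : #I ≤ κ) (c : I → X → Option Bool)
    (hdom : ∀ i, #(pdom (c i)) ≤ κ) (hc : ∀ i j, i < j → CoLE κ (c j) (c i)) :
    ∃ f : X → Option Bool, #(pdom f) ≤ κ ∧ ∀ i, CoLE κ f (c i) := by
  obtain ⟨f, hfdom, hf⟩ :=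
    exists_coherent_extension hκ hI c (coherent_range_of_antitone hκ.pos.ne' c hc)
  refine ⟨f, hfdom ▸ mk_iUnion_le_of_le_s15 hκ.aleph0_le hI _ hdom, fun i => ⟨?_, hf i⟩⟩
  exact hfdom ▸ subset_iUnion (fun i => pdom (c i)) i

theorem stmt15_general {X : Type u} (κ : Cardinal.{u}) (hκ : κ.IsRegular) :
    (∀ f : X → Option Bool, CoLE κ f f) ∧
    (∀ f g h : X → Option Bool, CoLE κ f g → CoLE κ g h → CoLE κ f h) ∧
    (∀ δ : Ordinal.{u}, δ < (Order.succ κ).ord →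
      ∀ c : δ.ToType → {f : X → Option Bool // #(pdom f) ≤ κ},
        (∀ i j, i < j → CoLE κ (c j).1 (c i).1) →
        ∃ f : X → Option Bool, #(pdom f) ≤ κ ∧ ∀ i, CoLE κ f (c i).1) := by
  refine ⟨coLE_refl hκ.pos.ne', fun _ _ _ => coLE_trans hκ.aleph0_le, fun δ hδ c hc => ?_⟩
  have hδκ : #δ.ToType ≤ κ := by
    rw [mk_toType]
    exact Order.lt_succ_iff.mp (lt_ord.mp hδ)
  exact exists_coLE_lower_bound hκ hδκ (fun i => (c i).1) (fun i => (c i).2) hc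

/-- The poset of partial functions from `λ` to `2` of size `≤ κ`, ordered with
`< κ` disagreement allowed, is a transitive, reflexive ordering that is
`κ⁺`-closed: every decreasing sequence of length `≤ κ` has a lower bound. -/
theorem stmt15 {X : Type u} (κ : Cardinal.{u}) (hκ : κ.IsRegular)
    (hpow : (2 : Cardinal.{u}) ^< κ = κ) (hX : κ < #X) :
    (∀ f : X → Option Bool, CoLE κ f f) ∧
    (∀ f g h : X → Option Bool, CoLE κ f g → CoLE κ g h → CoLE κ f h) ∧
    (∀ δ : Ordinal.{u}, δ < (Order.succ κ).ord →
      ∀ c : δ.ToType → {f : X → Option Bool // #(pdom f) ≤ κ},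
        (∀ i j, i < j → CoLE κ (c j).1 (c i).1) →
        ∃ f : X → Option Bool, #(pdom f) ≤ κ ∧ ∀ i, CoLE κ f (c i).1) :=
  stmt15_general κ hκ

end ForestPaper
end

section
/- Let κ be regular with 2^{<κ} = κ. Suppose F is a coherent (κ⁺, λ, κ)-forest of injective functions, closed under < κ modifications (to other injective functions). Then for every f ∈ F with dom(f) of size ≤ κ, the complement κ \ ran(f) has cardinality κ. -/
/-! Since `|X| > κ ≥ |dom f|`, the forest contains an extension `g` of `f` whose domain has
`κ` new points. As `g` is injective and agrees with `f` on `dom f`, it sends these new points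
outside `ran f`, so `κ \ ran f` has at least `κ` elements. -/

open Cardinal Set
open scoped Classical

universe u v

namespace ForestPaper

variable {X : Type u} {μ : Type v}

theorem PInj.injOn_s16 {g : X → Option μ} (hg : PInj g) : InjOn g (pdom g) :=
  fun x hx y _ hxy => hg x y hx hxy

theorem PInj.image_diff_subset {f g : X → Option μ} (hg : PInj g) (hext : Ext g f) :
    g '' (pdom g \ pdom f) ⊆ some '' (pran f)ᶜ := by
  rintro _ ⟨x, ⟨hxg, hxf⟩, rfl⟩
  obtain ⟨y, hy⟩ := Option.ne_none_iff_exists'.mp hxg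
  refine ⟨y, fun ⟨x', hx'⟩ => hxf ?_, hy.symm⟩
  have hfx' : f x' ≠ none := by simp [hx']
  have hxx' : x = x' := hg x x' hxg (by rw [hy, hext x' hfx', hx'])
  exact hxx' ▸ hfx'

theorem PInj.lift_mk_diff_pdom_le {f g : X → Option μ} (hg : PInj g) (hext : Ext g f) :
    lift.{v} #(pdom g \ pdom f : Set X) ≤ lift.{u} #((pran f)ᶜ : Set μ) := by
  rw [← mk_image_eq_of_injOn_lift g _ (hg.injOn_s16.mono sdiff_subset),
    ← mk_image_eq (s := (pran f)ᶜ) (Option.some_injective μ)]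
  exact lift_le.mpr (mk_le_mk_of_subset (hg.image_diff_subset hext))

theorem IsForest.exists_ext_mk_diff_pdom {κ : Cardinal.{u}} {F : Set (X → Option μ)}
    (hF : IsForest (Order.succ κ) F) (hκ : ℵ₀ ≤ κ) (hX : Order.succ κ ≤ #X)
    {f : X → Option μ} (hf : f ∈ F) :
    ∃ g ∈ F, Ext g f ∧ #(pdom g \ pdom f : Set X) = κ := by
  have hdom : #(pdom f) ≤ κ := Order.lt_succ_iff.mp (hF.dom_small f hf)
  have hκX : κ < #X := (Order.lt_succ κ).trans_le hX
  have : Infinite X := infinite_iff.mpr (hκ.trans hκX.le)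
  have hcompl : κ ≤ #((pdom f)ᶜ : Set X) := by
    rw [mk_compl_of_infinite _ (hdom.trans_lt hκX)]
    exact hκX.le
  obtain ⟨z, hzf, hz⟩ := le_mk_iff_exists_subset.mp hcompl
  have hunion : #(pdom f ∪ z : Set X) < Order.succ κ := by
    refine Order.lt_succ_iff.mpr ((mk_union_le _ _).trans ?_)
    rw [hz]
    exact (add_le_add hdom le_rfl).trans (add_eq_self hκ).le
  obtain ⟨g, hg, hgdom, hgf⟩ := hF.extend_mem f hf _ hunion subset_union_left
  refine ⟨g, hg, hgf, ?_⟩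
  rwa [hgdom, union_sdiff_left, (subset_compl_iff_disjoint_right.mp hzf).sdiff_eq_left]

theorem stmt16_general {X : Type u} (κ : Cardinal.{u}) (hκ : κ.IsRegular)
    (hX : Order.succ κ ≤ #X)
    (F : Set (X → Option κ.ord.ToType)) (hF : IsForest (Order.succ κ) F)
    (hinj : ∀ f ∈ F, PInj f)
    (f : X → Option κ.ord.ToType) (hf : f ∈ F) :
    #({y | y ∉ pran f} : Set κ.ord.ToType) = κ := by
  obtain ⟨g, hg, hgf, hnew⟩ := hF.exists_ext_mk_diff_pdom hκ.aleph0_le hX hf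
  refine le_antisymm ((mk_set_le _).trans (mk_ord_toType κ).le) ?_
  have hle := (hinj g hg).lift_mk_diff_pdom_le hgf
  rwa [lift_id, lift_id, hnew] at hle

/-- For a coherent `(κ⁺,λ,κ)`-forest of injective functions, closed under `< κ`
modifications to injective functions, the complement of the range of any member
has cardinality `κ`. -/
theorem stmt16 {X : Type u} (κ : Cardinal.{u}) (hκ : κ.IsRegular)
    (hpow : (2 : Cardinal.{u}) ^< κ = κ) (hX : Order.succ κ ≤ #X)
    (F : Set (X → Option κ.ord.ToType)) (hF : IsForest (Order.succ κ) F)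
    (hcoh : Coherent κ F) (hinj : ∀ f ∈ F, PInj f)
    (hmod : ∀ f ∈ F, ∀ f' : X → Option κ.ord.ToType, PInj f' →
      pdom f' = pdom f → #{x | f x ≠ f' x} < κ → f' ∈ F)
    (f : X → Option κ.ord.ToType) (hf : f ∈ F) :
    #({y | y ∉ pran f} : Set κ.ord.ToType) = κ :=
  stmt16_general κ hκ hX F hF hinj f hf
end ForestPaper
end

section
/- W_κ(λ) implies 2^{<κ} = κ. That is, if there exist a κ-tree T, a set B of λ ≥ κ cofinal branches, and a sequence ⟨W_α : α < κ⟩ with |W_α| < κ and W_α ⊆ 𝒫(T_α), such that every z ⊆ B of size < κ satisfies π_β[z] ∈ W_β for all sufficiently large β < κ, then 2^{<κ} = κ. -/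
open Cardinal Set
open scoped Classical

universe u v

namespace ForestPaper

variable {X : Type u} {μ : Type v}

/-- A `κ`-tree presented as an inverse system of levels indexed by the ordinals
below `κ`, with projection maps, all levels of size `< κ`. -/
structure TreeSystem (κ : Cardinal.{u}) where
  Lev : κ.ord.ToType → Type u
  proj : ∀ {α β : κ.ord.ToType}, β ≤ α → Lev α → Lev β
  proj_refl : ∀ (α : κ.ord.ToType) (x : Lev α), proj le_rfl x = x
  proj_comp : ∀ {α β γ : κ.ord.ToType} (h1 : γ ≤ β) (h2 : β ≤ α) (x : Lev α),
    proj h1 (proj h2 x) = proj (h1.trans h2) x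
  small : ∀ α, #(Lev α) < κ

/-- A cofinal branch of a tree system: a coherent choice of a node at each level. -/
def Branch {κ : Cardinal.{u}} (T : TreeSystem κ) : Type u :=
  {b : ∀ α, T.Lev α // ∀ (α β : κ.ord.ToType) (h : β ≤ α), T.proj h (b α) = b β}

/-- The principle `W_κ(λ)`: there are a `κ`-tree `T`, a set `B` of `λ` many
cofinal branches, and small families `W_α ⊆ 𝒫(T_α)` such that every subset of
`B` of size `< κ` has its level-`β` projections in `W_β` for all sufficiently
large `β`. -/
def WPrinciple (κ lam : Cardinal.{u}) : Prop :=
  ∃ (T : TreeSystem κ) (B : Set (Branch T))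
    (W : ∀ α : κ.ord.ToType, Set (Set (T.Lev α))),
    #B = lam ∧ (∀ α, #(W α) < κ) ∧
    ∀ z : Set (Branch T), z ⊆ B → #z < κ →
      ∃ α, ∀ β, α ≤ β → {n : T.Lev β | ∃ b ∈ z, b.1 β = n} ∈ W β

/-
Fix `ν < κ` and a set `z ⊆ B` of `ν` branches. Distinct branches of `z` split below some level,
and by regularity of `κ` all these splitting levels are bounded by some `γ`, so above `γ` the
projection `b ↦ π_β(b)` is injective on `z`. Each `s ⊆ z` is then recovered from any pair
`(β, π_β[s])` with `β ≥ γ`, and `W_κ(λ)` lets us choose `β` with `π_β[s] ∈ W_β`. Hence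
`2^ν ≤ |Σ_{β<κ} W_β| ≤ κ`.
-/

lemma bddAbove_range_of_mk_lt {κ : Cardinal.{u}} (hκ : κ.IsRegular) {ι : Type u} (hι : #ι < κ)
    (f : ι → κ.ord.ToType) : BddAbove (range f) := by
  refine BddAbove.of_not_isCofinal fun hcof => (Order.cof_le hcof).not_gt ?_
  rw [Ordinal.cof_toType, hκ.cof_ord]
  exact mk_range_le.trans_lt hι

lemma mk_sigma_le_of_forall_lt {κ : Cardinal.{u}} (hκ : ℵ₀ ≤ κ) (W : κ.ord.ToType → Type u)
    (hW : ∀ α, #(W α) < κ) : #(Σ α, W α) ≤ κ :=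
  calc #(Σ α, W α) = sum fun α => #(W α) := mk_sigma W
    _ ≤ sum fun _ : κ.ord.ToType => κ := sum_le_sum _ _ fun α => (hW α).le
    _ = κ * κ := by rw [sum_const', mk_toType, card_ord]
    _ = κ := mul_eq_self hκ

lemma le_two_powerlt (c : Cardinal.{u}) : c ≤ 2 ^< c := by
  by_contra! h
  exact (le_powerlt 2 h).not_gt (cantor _)

namespace Branch

variable {κ : Cardinal.{u}} {T : TreeSystem κ}

lemma eq_of_eq_of_le {b b' : Branch T} {α β : κ.ord.ToType} (hαβ : α ≤ β)
    (hβ : b.1 β = b'.1 β) : b.1 α = b'.1 α := by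
  rw [← b.2 β α hαβ, ← b'.2 β α hαβ, hβ]

lemma exists_injOn_level (hκ : κ.IsRegular) {z : Set (Branch T)} (hz : #z < κ) :
    ∃ γ, ∀ β, γ ≤ β → InjOn (fun b : Branch T => b.1 β) z := by
  have hsplit : ∀ q : {q : z × z // q.1 ≠ q.2},
      ∃ α, (q.1.1 : Branch T).1 α ≠ (q.1.2 : Branch T).1 α :=
    fun ⟨_, hne⟩ => Function.ne_iff.1 fun h => hne (Subtype.ext (Subtype.ext h))
  choose D hD using hsplit
  have hzz : #{q : z × z // q.1 ≠ q.2} < κ := by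
    refine mk_subtype_le _ |>.trans_lt ?_
    rw [mk_prod, lift_id]
    exact mul_lt_of_lt hκ.aleph0_le hz hz
  obtain ⟨γ, hγ⟩ := bddAbove_range_of_mk_lt hκ hzz D
  refine ⟨γ, fun β hγβ b hb b' hb' hβ => ?_⟩
  by_contra hne
  exact hD ⟨(⟨b, hb⟩, ⟨b', hb'⟩), fun h => hne (congrArg Subtype.val h)⟩
    (eq_of_eq_of_le ((hγ (mem_range_self _)).trans hγβ) hβ)

end Branch

lemma two_pow_mk_le_of_eventually_mem {κ : Cardinal.{u}} (hκ : κ.IsRegular) {T : TreeSystem κ}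
    (W : ∀ α : κ.ord.ToType, Set (Set (T.Lev α))) (hW : ∀ α, #(W α) < κ)
    {z : Set (Branch T)} (hz : #z < κ)
    (hcover : ∀ s ⊆ z, ∃ α, ∀ β, α ≤ β → (fun b : Branch T => b.1 β) '' s ∈ W β) :
    2 ^ #z ≤ κ := by
  obtain ⟨γ, hγ⟩ := Branch.exists_injOn_level hκ hz
  choose A hA using hcover
  let encode : 𝒫 z → Σ β, W β := fun s =>
    ⟨max γ (A s s.2), _, hA s s.2 _ (le_max_right _ _)⟩
  let decode : (Σ β, W β) → Set (Branch T) := fun w =>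
    (fun b : Branch T => b.1 w.1) ⁻¹' w.2 ∩ z
  have hdecode : ∀ s, decode (encode s) = s := fun s =>
    (hγ _ (le_max_left _ _)).preimage_image_inter s.2
  have hinj : Function.Injective encode := fun s t hst =>
    Subtype.ext ((hdecode s).symm.trans ((congrArg decode hst).trans (hdecode t)))
  calc 2 ^ #z = #(𝒫 z) := (mk_powerset z).symm
    _ ≤ #(Σ β, W β) := mk_le_of_injective hinj
    _ ≤ κ := mk_sigma_le_of_forall_lt hκ.aleph0_le _ hW

lemma two_pow_le_of_wPrinciple {κ lam : Cardinal.{u}} (hκ : κ.IsRegular) (hlam : κ ≤ lam)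
    (hW : WPrinciple κ lam) {ν : Cardinal.{u}} (hν : ν < κ) : 2 ^ ν ≤ κ := by
  obtain ⟨T, B, W, hB, hWsmall, hcover⟩ := hW
  obtain ⟨p, hp⟩ := le_mk_iff_exists_set.1 (hν.le.trans (hlam.trans hB.ge))
  have hpν : #(Subtype.val '' p) = ν := (mk_image_eq Subtype.val_injective).trans hp
  have hpκ : #(Subtype.val '' p) < κ := hpν ▸ hν
  rw [← hpν]
  refine two_pow_mk_le_of_eventually_mem hκ W hWsmall hpκ fun s hs => ?_
  refine hcover s (hs.trans ?_) ((mk_le_mk_of_subset hs).trans_lt hpκ)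
  exact image_subset_iff.2 fun b _ => b.2

theorem stmt18_general (κ lam : Cardinal.{u}) (hκ : κ.IsRegular)
    (hlam : κ ≤ lam) (hW : WPrinciple κ lam) :
    (2 : Cardinal.{u}) ^< κ = κ :=
  (powerlt_le.2 fun _ hν => two_pow_le_of_wPrinciple hκ hlam hW hν).antisymm (le_two_powerlt κ)

/-- `W_κ(λ)` implies `2^{<κ} = κ`. -/
theorem stmt18 (κ lam : Cardinal.{u}) (hκ : κ.IsRegular) (huncount : ℵ₀ < κ)
    (hlam : κ ≤ lam) (hW : WPrinciple κ lam) :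
    (2 : Cardinal.{u}) ^< κ = κ :=
  stmt18_general κ lam hκ hlam hW

end ForestPaper
end
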